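/- arXiv:2602.05593 — 4 statements merged into one kernel-verified Lean document; each statement's English description precedes it below -/
import Mathlib

section
/- Let μ be a self-similar measure on [0,1] for contracting similarities {T_a}_{a ∈ A} with probability vector (p_a), all p_a > 0. Let f : [0,1] → ℝ be a C² map with f'(x) ≠ 0 for all x ∈ [0,1], let g be a two-sided inverse of f from f([0,1]) to [0,1], and for each a ∈ A set S_a = f ∘ T_a ∘ g. Let Z = {x ∈ [0,1] : f''(x) = 0} and suppose μ(Z) > 0 and that the pushforward f_* μ satisfies f_* μ = Σ_a p_a (S_a)_* (f_* μ). Then there exists a finite word (a_1, …, a_k) ∈ A^k for some k ≥ 1 such that f_* μ ({y : (S_{a_1} ∘ ⋯ ∘ S_{a_k})''(y) = 0}) > 0. -/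
/-!
With weights `p a`, the self-similarity of `μ` says that `μ` is invariant for the Markov operator
`h ↦ ∑ a, p a * h ∘ T a`, so the random orbit `x, T a₁ x, T a₂ (T a₁ x), …` of a `μ`-typical point
visits a set `Z` on average `(n + 1) μ(Z)` times up to time `n`. If `μ(Z ∩ T_w⁻¹ Z) = 0` for every
nonempty word `w`, then almost surely the orbit visits `Z` at most once, so `(n + 1) μ(Z) ≤ 1` for
all `n`, which forces `μ(Z) = 0`. Applied to `Z = {f'' = 0} ∩ (0, 1)` this gives a word `w` and a
set of positive measure of points `x` with `f''(x) = f''(T_w x) = 0`. Near `f x` the map `S_w` is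
`f ∘ T_w ∘ g` with `T_w` affine, and differentiating twice, `(S_w)''(f x)` is a combination of
`f''(x)` and `f''(T_w x)`, hence zero.
-/

open MeasureTheory Filter Set
open scoped ENNReal NNReal Topology

/-- Composition `S_{a_1} ∘ ⋯ ∘ S_{a_k}` of the maps of an IFS along a finite word. -/
def wordComp {m : ℕ} (S : Fin m → ℝ → ℝ) : List (Fin m) → ℝ → ℝ
  | [] => id
  | a :: l => S a ∘ wordComp S l

section MarkovOperator

variable {X ι : Type*} [Fintype ι]

noncomputable def markovOp (P : ι → ℝ≥0∞) (T : ι → X → X) : Module.End ℝ≥0∞ (X → ℝ≥0∞) where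
  toFun h x := ∑ a, P a * h (T a x)
  map_add' h h' := by ext x; simp [mul_add, Finset.sum_add_distrib]
  map_smul' c h := by ext x; simp [Finset.mul_sum, mul_left_comm]

variable {P : ι → ℝ≥0∞} {T : ι → X → X} {h : X → ℝ≥0∞}

theorem markovOp_apply (x : X) : markovOp P T h x = ∑ a, P a * h (T a x) := rfl

theorem markovOp_mono {h' : X → ℝ≥0∞} (hh : h ≤ h') : markovOp P T h ≤ markovOp P T h' :=
  fun _ => Finset.sum_le_sum fun _ _ => by gcongr; exact hh _

theorem markovOp_one (hP : ∑ a, P a = 1) : markovOp P T 1 = 1 := by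
  ext x; simp [markovOp_apply, hP]

/- `expectedVisits P T Z n x` and `expectedVisitPairs P T Z n x` are the expected number of times
`k ≤ n`, resp. of pairs of such times, at which the random orbit of `x` (with the `aᵢ` drawn
independently from `P`) lies in `Z`. -/
variable (P T) in
noncomputable def expectedVisits (Z : Set X) (n : ℕ) : X → ℝ≥0∞ :=
  ∑ k ∈ Finset.range (n + 1), (markovOp P T ^ k) (Z.indicator 1)

variable (P T) in
noncomputable def expectedVisitPairs (Z : Set X) : ℕ → X → ℝ≥0∞
  | 0 => 0
  | n + 1 => markovOp P T (expectedVisitPairs Z n) +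
      Z.indicator 1 * markovOp P T (expectedVisits P T Z n)

variable {Z : Set X}

theorem markovOp_expectedVisits (n : ℕ) :
    markovOp P T (expectedVisits P T Z n) =
      ∑ k ∈ Finset.range (n + 1), (markovOp P T ^ (k + 1)) (Z.indicator 1) := by
  simp only [expectedVisits, map_sum, pow_succ', Module.End.mul_apply]

theorem expectedVisits_succ (n : ℕ) :
    expectedVisits P T Z (n + 1) = Z.indicator 1 + markovOp P T (expectedVisits P T Z n) := by
  rw [markovOp_expectedVisits, expectedVisits, Finset.sum_range_succ', pow_zero,
    Module.End.one_apply, add_comm]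

/-- The expectation of the inequality `N ≤ 1 + N (N - 1) / 2` for the number `N` of visits. -/
theorem expectedVisits_le (hP : ∑ a, P a = 1) (n : ℕ) :
    expectedVisits P T Z n ≤ 1 + expectedVisitPairs P T Z n := by
  induction n with
  | zero =>
    intro x
    simp only [expectedVisits, zero_add, Finset.range_one, Finset.sum_singleton, pow_zero,
      Module.End.one_apply, expectedVisitPairs, add_zero]
    exact Set.indicator_le_self' (fun _ _ => zero_le_one) x
  | succ n ih =>
    intro x
    rw [expectedVisits_succ]
    by_cases hx : x ∈ Z
    · simp only [expectedVisitPairs, Pi.add_apply, Pi.mul_apply, Set.indicator_of_mem hx,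
        Pi.one_apply, one_mul]
      gcongr
      exact le_add_self
    · have := markovOp_mono (P := P) (T := T) ih x
      rw [map_add, markovOp_one hP] at this
      simpa [expectedVisitPairs, Set.indicator_of_notMem hx] using this

variable [MeasurableSpace X] {μ : Measure X}

theorem measurable_markovOp (hT : ∀ a, Measurable (T a)) (hh : Measurable h) :
    Measurable (markovOp P T h) :=
  Finset.measurable_sum _ fun a _ => measurable_const.mul (hh.comp (hT a))

theorem measurable_markovOp_pow (hT : ∀ a, Measurable (T a)) (hh : Measurable h) (k : ℕ) :
    Measurable ((markovOp P T ^ k) h) := by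
  induction k with
  | zero => exact hh
  | succ k ih => rw [pow_succ', Module.End.mul_apply]; exact measurable_markovOp hT ih

theorem measurable_expectedVisits (hT : ∀ a, Measurable (T a)) (hZ : MeasurableSet Z) (n : ℕ) :
    Measurable (expectedVisits P T Z n) := by
  rw [expectedVisits, Finset.sum_fn]
  exact Finset.measurable_sum _ fun k _ =>
    measurable_markovOp_pow hT (measurable_one.indicator hZ) k

theorem measurable_expectedVisitPairs (hT : ∀ a, Measurable (T a)) (hZ : MeasurableSet Z) :
    ∀ n, Measurable (expectedVisitPairs P T Z n)
  | 0 => measurable_const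
  | n + 1 => (measurable_markovOp hT (measurable_expectedVisitPairs hT hZ n)).add
      ((measurable_one.indicator hZ).mul
        (measurable_markovOp hT (measurable_expectedVisits hT hZ n)))

theorem lintegral_markovOp (hT : ∀ a, Measurable (T a)) (hμ : μ = ∑ a, P a • μ.map (T a))
    (hh : Measurable h) : ∫⁻ x, markovOp P T h x ∂μ = ∫⁻ x, h x ∂μ := by
  conv_rhs => rw [hμ]
  simp only [markovOp_apply]
  rw [lintegral_finsetSum_measure, lintegral_finsetSum _ fun a _ => by fun_prop]
  refine Finset.sum_congr rfl fun a _ => ?_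
  rw [lintegral_smul_measure, lintegral_map hh (hT a), smul_eq_mul]
  exact lintegral_const_mul _ (hh.comp (hT a))

theorem lintegral_markovOp_pow (hT : ∀ a, Measurable (T a))
    (hμ : μ = ∑ a, P a • μ.map (T a)) (hh : Measurable h) (k : ℕ) :
    ∫⁻ x, (markovOp P T ^ k) h x ∂μ = ∫⁻ x, h x ∂μ := by
  induction k with
  | zero => rfl
  | succ k ih =>
    rw [pow_succ', Module.End.mul_apply,
      lintegral_markovOp hT hμ (measurable_markovOp_pow hT hh k), ih]

theorem lintegral_expectedVisits (hT : ∀ a, Measurable (T a))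
    (hμ : μ = ∑ a, P a • μ.map (T a)) (hZ : MeasurableSet Z) (n : ℕ) :
    ∫⁻ x, expectedVisits P T Z n x ∂μ = (n + 1) * μ Z := by
  have hind : Measurable (Z.indicator (1 : X → ℝ≥0∞)) := measurable_one.indicator hZ
  simp only [expectedVisits, Finset.sum_apply]
  rw [lintegral_finsetSum _ fun k _ => measurable_markovOp_pow hT hind k]
  simp [lintegral_markovOp_pow hT hμ hind, lintegral_indicator_one hZ]

theorem lintegral_expectedVisitPairs (hT : ∀ a, Measurable (T a))
    (hμ : μ = ∑ a, P a • μ.map (T a)) (hZ : MeasurableSet Z)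
    (hreturn : ∀ k, 0 < k →
      ∫⁻ x, Z.indicator 1 x * (markovOp P T ^ k) (Z.indicator 1) x ∂μ = 0) (n : ℕ) :
    ∫⁻ x, expectedVisitPairs P T Z n x ∂μ = 0 := by
  have hind : Measurable (Z.indicator (1 : X → ℝ≥0∞)) := measurable_one.indicator hZ
  induction n with
  | zero => simp [expectedVisitPairs]
  | succ n ih =>
    have hV := measurable_expectedVisitPairs (P := P) hT hZ n
    simp only [expectedVisitPairs, Pi.add_apply, Pi.mul_apply, markovOp_expectedVisits,
      Finset.sum_apply, Finset.mul_sum]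
    rw [lintegral_add_left (measurable_markovOp hT hV), lintegral_markovOp hT hμ hV, ih, zero_add,
      lintegral_finsetSum _ fun k _ => ?_]
    · exact Finset.sum_eq_zero fun k _ => hreturn (k + 1) k.succ_pos
    · exact hind.mul (measurable_markovOp_pow hT hind (k + 1))

theorem exists_lintegral_indicator_mul_markovOp_pow_pos [IsProbabilityMeasure μ]
    (hP : ∑ a, P a = 1) (hT : ∀ a, Measurable (T a)) (hμ : μ = ∑ a, P a • μ.map (T a))
    (hZ : MeasurableSet Z) (hZpos : 0 < μ Z) :
    ∃ k, 0 < k ∧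
      0 < ∫⁻ x, Z.indicator 1 x * (markovOp P T ^ k) (Z.indicator 1) x ∂μ := by
  by_contra! hreturn
  have hbound (n : ℕ) : (n + 1) * μ Z ≤ 1 := calc
    (n + 1) * μ Z = ∫⁻ x, expectedVisits P T Z n x ∂μ :=
        (lintegral_expectedVisits hT hμ hZ n).symm
    _ ≤ ∫⁻ x, 1 + expectedVisitPairs P T Z n x ∂μ :=
        lintegral_mono (expectedVisits_le hP n)
    _ = 1 := by
      rw [lintegral_add_left measurable_const,
        lintegral_expectedVisitPairs hT hμ hZ (fun k hk => nonpos_iff_eq_zero.1 (hreturn k hk)) n]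
      simp
  obtain ⟨n, hn⟩ := ENNReal.exists_nat_mul_gt hZpos.ne' ENNReal.one_ne_top
  have hle : (n : ℝ≥0∞) * μ Z ≤ (n + 1) * μ Z := by gcongr; exact le_self_add
  exact (hn.trans_le (hle.trans (hbound n))).false

end MarkovOperator

section Words

variable {m : ℕ}

theorem measurable_wordComp {T : Fin m → ℝ → ℝ} (hT : ∀ a, Measurable (T a)) :
    ∀ l, Measurable (wordComp T l)
  | [] => measurable_id
  | a :: l => (hT a).comp (measurable_wordComp hT l)

theorem mapsTo_wordComp {T : Fin m → ℝ → ℝ} {s : Set ℝ} (hT : ∀ a, MapsTo (T a) s s) :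
    ∀ l, MapsTo (wordComp T l) s s
  | [] => mapsTo_id s
  | a :: l => (hT a).comp (mapsTo_wordComp hT l)

theorem eqOn_wordComp_comp {S T : Fin m → ℝ → ℝ} {f : ℝ → ℝ} {s : Set ℝ}
    (hT : ∀ a, MapsTo (T a) s s) (hST : ∀ a, EqOn (S a ∘ f) (f ∘ T a) s) :
    ∀ l, EqOn (wordComp S l ∘ f) (f ∘ wordComp T l) s
  | [] => fun _ _ => rfl
  | a :: l => fun _ hx =>
    (congrArg (S a) (eqOn_wordComp_comp hT hST l hx)).trans (hST a (mapsTo_wordComp hT l hx))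

theorem exists_wordComp_eq_affine (r c : Fin m → ℝ) :
    ∀ l, ∃ R C : ℝ, wordComp (fun a x => r a * x + c a) l = fun x => R * x + C
  | [] => ⟨1, 0, by funext x; simp [wordComp]⟩
  | a :: l => by
    obtain ⟨R, C, hRC⟩ := exists_wordComp_eq_affine r c l
    refine ⟨r a * R, r a * C + c a, funext fun x => ?_⟩
    simp only [wordComp, hRC, Function.comp_apply]
    ring

variable {μ : Measure ℝ} {P : Fin m → ℝ≥0∞} {T : Fin m → ℝ → ℝ}

theorem lintegral_mul_markovOp_pow_eq_zero (hT : ∀ a, Measurable (T a)) {φ : ℝ → ℝ≥0∞}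
    (hφ : Measurable φ) (k : ℕ) {h : ℝ → ℝ≥0∞} (hh : Measurable h)
    (H : ∀ l : List (Fin m), l.length = k → ∫⁻ x, φ x * h (wordComp T l x) ∂μ = 0) :
    ∫⁻ x, φ x * (markovOp P T ^ k) h x ∂μ = 0 := by
  induction k generalizing h with
  | zero => simpa [wordComp] using H [] rfl
  | succ k ih =>
    rw [pow_succ, Module.End.mul_apply]
    refine ih (measurable_markovOp hT hh) fun l hl => ?_
    have hmeas (a : Fin m) : Measurable fun x => φ x * h (wordComp T (a :: l) x) :=
      hφ.mul (hh.comp (measurable_wordComp hT (a :: l)))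
    calc ∫⁻ x, φ x * markovOp P T h (wordComp T l x) ∂μ
        = ∫⁻ x, ∑ a, P a * (φ x * h (wordComp T (a :: l) x)) ∂μ := by
          simp only [markovOp_apply, Finset.mul_sum]
          congr! 3 with x a
          simp only [wordComp, Function.comp_apply]
          ring
      _ = 0 := by
          rw [lintegral_finsetSum _ fun a _ => (hmeas a).const_mul _]
          refine Finset.sum_eq_zero fun a _ => ?_
          rw [lintegral_const_mul _ (hmeas a), H (a :: l) (by simp [hl]), mul_zero]

theorem exists_word_measure_inter_preimage_pos [IsProbabilityMeasure μ] {Z : Set ℝ}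
    (hP : ∑ a, P a = 1) (hT : ∀ a, Measurable (T a)) (hμ : μ = ∑ a, P a • μ.map (T a))
    (hZ : MeasurableSet Z) (hZpos : 0 < μ Z) :
    ∃ l : List (Fin m), l ≠ [] ∧ 0 < μ (Z ∩ wordComp T l ⁻¹' Z) := by
  obtain ⟨k, hk, hpos⟩ := exists_lintegral_indicator_mul_markovOp_pow_pos hP hT hμ hZ hZpos
  by_contra! hnull
  have hind : Measurable (Z.indicator (1 : ℝ → ℝ≥0∞)) := measurable_one.indicator hZ
  refine hpos.ne' (lintegral_mul_markovOp_pow_eq_zero hT hind k hind fun l hlen => ?_)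
  have hl : l ≠ [] := List.ne_nil_of_length_pos (hlen ▸ hk)
  rw [← nonpos_iff_eq_zero]
  convert hnull l hl using 1
  rw [← lintegral_indicator_one (hZ.inter (measurable_wordComp hT l hZ)), Set.inter_indicator_one]
  rfl

end Words

theorem iteratedDerivWithin_eq_iteratedDeriv_of_mem_nhds {𝕜 F : Type*}
    [NontriviallyNormedField 𝕜] [NormedAddCommGroup F] [NormedSpace 𝕜 F] {n : ℕ} {φ : 𝕜 → F}
    {s : Set 𝕜} {x : 𝕜} (hs : s ∈ 𝓝 x) : iteratedDerivWithin n φ s x = iteratedDeriv n φ x := by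
  simp only [iteratedDerivWithin, iteratedDeriv, ← iteratedFDerivWithin_univ,
    iteratedFDerivWithin_congr_set (eventuallyEq_univ.2 hs)]

theorem iteratedDeriv_two_comp_affine_comp_eq_zero {U : Set ℝ} {f g : ℝ → ℝ} (hU : IsOpen U)
    (hf : ContDiffOn ℝ 2 f U) (hf' : ∀ x ∈ U, deriv f x ≠ 0) (hg : ∀ x ∈ U, g (f x) = x)
    {x R C : ℝ} (hx : x ∈ U) (hAx : R * x + C ∈ U) (h2x : iteratedDeriv 2 f x = 0)
    (h2Ax : iteratedDeriv 2 f (R * x + C) = 0) :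
    iteratedDeriv 2 (fun y => f (R * g y + C)) (f x) = 0 := by
  have hD (x) (hx : x ∈ U) : HasStrictDerivAt f (deriv f x) x :=
    (hf.contDiffAt (hU.mem_nhds hx)).hasStrictDerivAt two_ne_zero
  have hD2 (x) (hx : x ∈ U) : HasDerivAt (deriv f) (iteratedDeriv 2 f x) x := by
    rw [iteratedDeriv_succ, iteratedDeriv_one]
    exact ((hf.deriv_of_isOpen hU (by norm_num : (1 : WithTop ℕ∞) + 1 ≤ 2)).differentiableOn
      one_ne_zero x hx |>.differentiableAt (hU.mem_nhds hx)).hasDerivAt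
  have hg' (x) (hx : x ∈ U) : HasDerivAt g (deriv f x)⁻¹ (f x) :=
    ((hD x hx).to_local_left_inverse (hf' x hx)
      (eventually_of_mem (hU.mem_nhds hx) hg)).hasDerivAt
  have hA (x) (hx : x ∈ U) : HasDerivAt (fun y => R * g y + C) (R * (deriv f x)⁻¹) (f x) :=
    ((hg' x hx).const_mul R).add_const C
  have hnear : ∀ᶠ y in 𝓝 (f x), ∃ x' ∈ U ∩ (fun t => R * t + C) ⁻¹' U, f x' = y := by
    rw [← (hD x hx).map_nhds_eq (hf' x hx)]
    have hV : IsOpen (U ∩ (fun t => R * t + C) ⁻¹' U) := hU.inter (hU.preimage (by fun_prop))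
    exact eventually_map.2
      (eventually_of_mem (hV.mem_nhds ⟨hx, hAx⟩) fun x' hx' => ⟨x', hx', rfl⟩)
  have hF' : deriv (fun y => f (R * g y + C)) =ᶠ[𝓝 (f x)]
      fun y => deriv f (R * g y + C) * R * (deriv f (g y))⁻¹ := by
    filter_upwards [hnear] with y ⟨x', ⟨hx'U, hAx'U⟩, hy⟩
    subst hy
    rw [hg x' hx'U, mul_assoc]
    exact ((hD _ hAx'U).hasDerivAt.comp_of_eq (f x') (hA x' hx'U) (by rw [hg x' hx'U])).deriv
  have hgx : g (f x) = x := hg x hx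
  have hψ := (((hD2 _ hAx).comp_of_eq (f x) (hA x hx) (by rw [hgx])).mul_const R).mul
    (((hD2 x hx).comp_of_eq (f x) (hg' x hx) hgx.symm).inv (by simpa [hgx] using hf' x hx))
  rw [iteratedDeriv_succ, iteratedDeriv_one, hF'.deriv_eq]
  exact hψ.deriv.trans (by simp [h2x, h2Ax])

theorem iteratedDerivWithin_two_wordComp_eq_zero {m : ℕ} {r c : Fin m → ℝ}
    (hmaps : ∀ a, MapsTo (fun x : ℝ => r a * x + c a) (Icc 0 1) (Icc 0 1)) {f g : ℝ → ℝ}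
    (hf : ContDiffOn ℝ 2 f (Icc 0 1)) (hf' : ∀ x ∈ Icc (0 : ℝ) 1, derivWithin f (Icc 0 1) x ≠ 0)
    (hg : ∀ x ∈ Icc (0 : ℝ) 1, g (f x) = x) {S : Fin m → ℝ → ℝ}
    (hS : ∀ a, S a = fun y => f (r a * g y + c a)) (l : List (Fin m)) {x : ℝ}
    (hx : x ∈ Ioo 0 1) (hlx : wordComp (fun a x => r a * x + c a) l x ∈ Ioo 0 1)
    (h2x : iteratedDerivWithin 2 f (Icc 0 1) x = 0)
    (h2lx : iteratedDerivWithin 2 f (Icc 0 1) (wordComp (fun a x => r a * x + c a) l x) = 0) :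
    iteratedDerivWithin 2 (wordComp S l) (f '' Icc 0 1) (f x) = 0 := by
  obtain ⟨R, C, hRC⟩ := exists_wordComp_eq_affine r c l
  rw [hRC] at hlx h2lx
  have hIcc (y : ℝ) (hy : y ∈ Ioo 0 1) : Icc (0 : ℝ) 1 ∈ 𝓝 y := Icc_mem_nhds hy.1 hy.2
  have hfU : ContDiffOn ℝ 2 f (Ioo 0 1) := hf.mono Ioo_subset_Icc_self
  have hf'U (y : ℝ) (hy : y ∈ Ioo 0 1) : deriv f y ≠ 0 := by
    rw [← derivWithin_of_mem_nhds (hIcc y hy)]; exact hf' y (Ioo_subset_Icc_self hy)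
  have himage : f '' Ioo 0 1 ∈ 𝓝 (f x) := by
    rw [← ((hfU.contDiffAt (isOpen_Ioo.mem_nhds hx)).hasStrictDerivAt two_ne_zero).map_nhds_eq
      (hf'U x hx)]
    exact image_mem_map (isOpen_Ioo.mem_nhds hx)
  have hST (a : Fin m) : EqOn (S a ∘ f) (f ∘ fun x => r a * x + c a) (Icc 0 1) :=
    fun y hy => by simp [hS, hg y hy]
  have hconj : wordComp S l =ᶠ[𝓝 (f x)] fun y => f (R * g y + C) := by
    filter_upwards [himage] with _ ⟨y, hy, hyz⟩
    subst hyz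
    rw [hg y (Ioo_subset_Icc_self hy)]
    simpa [hRC] using eqOn_wordComp_comp hmaps hST l (Ioo_subset_Icc_self hy)
  rw [iteratedDerivWithin_eq_iteratedDeriv_of_mem_nhds
      (mem_of_superset himage (image_mono Ioo_subset_Icc_self)), hconj.iteratedDeriv_eq]
  refine iteratedDeriv_two_comp_affine_comp_eq_zero isOpen_Ioo hfU hf'U
    (fun y hy => hg y (Ioo_subset_Icc_self hy)) hx hlx ?_ ?_
  · rwa [← iteratedDerivWithin_eq_iteratedDeriv_of_mem_nhds (hIcc x hx)]
  · rwa [← iteratedDerivWithin_eq_iteratedDeriv_of_mem_nhds (hIcc _ hlx)]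

theorem stmt4_general (m : ℕ) (r c p : Fin m → ℝ)
    (hmaps : ∀ a, MapsTo (fun x : ℝ => r a * x + c a) (Set.Icc 0 1) (Set.Icc 0 1))
    (hp : ∀ a, 0 < p a) (hpsum : ∑ a, p a = 1)
    (μ : Measure ℝ) (hprob : IsProbabilityMeasure μ) (hna : ∀ x : ℝ, μ {x} = 0)
    (hsupp : μ (Set.Icc (0 : ℝ) 1) = 1)
    (hinv : μ = ∑ a, ENNReal.ofReal (p a) • Measure.map (fun x : ℝ => r a * x + c a) μ)
    (f : ℝ → ℝ) (hf : ContDiffOn ℝ 2 f (Set.Icc 0 1))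
    (hf' : ∀ x ∈ Set.Icc (0 : ℝ) 1, derivWithin f (Set.Icc 0 1) x ≠ 0)
    (g : ℝ → ℝ) (hg1 : ∀ x ∈ Set.Icc (0 : ℝ) 1, g (f x) = x)
    (S : Fin m → ℝ → ℝ) (hS : ∀ a, S a = fun y => f (r a * g y + c a))
    (hZ : 0 < μ {x ∈ Set.Icc (0 : ℝ) 1 | iteratedDerivWithin 2 f (Set.Icc 0 1) x = 0}) :
    ∃ l : List (Fin m), l ≠ [] ∧
      0 < Measure.map f μ
        {y ∈ f '' Set.Icc (0 : ℝ) 1 |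
          iteratedDerivWithin 2 (wordComp S l) (f '' Set.Icc (0 : ℝ) 1) y = 0} := by
  set Z := {x ∈ Icc (0 : ℝ) 1 | iteratedDerivWithin 2 f (Icc 0 1) x = 0}
  have : NullSingletonClass μ := ⟨hna⟩
  have hZmeas : MeasurableSet Z :=
    ((hf.continuousOn_iteratedDerivWithin le_rfl (uniqueDiffOn_Icc zero_lt_one)
      ).preimage_isClosed_of_isClosed isClosed_Icc isClosed_singleton).measurableSet
  have hZint : μ (Z ∩ Ioo 0 1) = μ Z := by
    rw [measure_congr ((ae_eq_refl Z).inter Ioo_ae_eq_Icc), inter_eq_left.2 (sep_subset _ _)]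
  have hP : ∑ a, ENNReal.ofReal (p a) = 1 := by
    rw [← ENNReal.ofReal_sum_of_nonneg fun a _ => (hp a).le, hpsum, ENNReal.ofReal_one]
  obtain ⟨l, hl, hpos⟩ := exists_word_measure_inter_preimage_pos hP (fun a => by fun_prop) hinv
    (hZmeas.inter measurableSet_Ioo) (hZint ▸ hZ)
  have hfμ : AEMeasurable f μ := by
    have hae : ∀ᵐ x ∂μ, x ∈ Icc (0 : ℝ) 1 :=
      mem_ae_iff.2 ((prob_compl_eq_zero_iff measurableSet_Icc).2 hsupp)
    exact Measure.restrict_eq_self_of_ae_mem hae ▸ hf.continuousOn.aemeasurable measurableSet_Icc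
  refine ⟨l, hl, hpos.trans_le ((measure_mono ?_).trans (Measure.le_map_apply hfμ _))⟩
  rintro x ⟨⟨hxZ, hx⟩, hlxZ, hlx⟩
  exact ⟨mem_image_of_mem f hxZ.1, iteratedDerivWithin_two_wordComp_eq_zero hmaps hf hf' hg1 hS
    l hx hlx hxZ.2 hlxZ.2⟩

/-- Let `μ` be a self-similar measure on `[0,1]` for similarities `T_a`, `f` a `C²` map on
`[0,1]` with nonvanishing derivative, `g` a two-sided inverse of `f`, and
`S_a = f ∘ T_a ∘ g`. If `μ({f'' = 0}) > 0` and `f_*μ` is self-conformal for `{S_a}`, then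
there is a nonempty word `w` with `f_*μ({y : (S_w)''(y) = 0}) > 0`. -/
theorem stmt4 (m : ℕ) (hm : 0 < m) (r c p : Fin m → ℝ)
    (hr : ∀ a, 0 < |r a| ∧ |r a| < 1)
    (hmaps : ∀ a, MapsTo (fun x : ℝ => r a * x + c a) (Set.Icc 0 1) (Set.Icc 0 1))
    (hp : ∀ a, 0 < p a) (hpsum : ∑ a, p a = 1)
    (μ : Measure ℝ) (hprob : IsProbabilityMeasure μ) (hna : ∀ x : ℝ, μ {x} = 0)
    (hsupp : μ (Set.Icc (0 : ℝ) 1) = 1)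
    (hinv : μ = ∑ a, ENNReal.ofReal (p a) • Measure.map (fun x : ℝ => r a * x + c a) μ)
    (f : ℝ → ℝ) (hf : ContDiffOn ℝ 2 f (Set.Icc 0 1))
    (hf' : ∀ x ∈ Set.Icc (0 : ℝ) 1, derivWithin f (Set.Icc 0 1) x ≠ 0)
    (g : ℝ → ℝ) (hg1 : ∀ x ∈ Set.Icc (0 : ℝ) 1, g (f x) = x)
    (hg2 : ∀ y ∈ f '' Set.Icc (0 : ℝ) 1, f (g y) = y)
    (S : Fin m → ℝ → ℝ) (hS : ∀ a, S a = fun y => f (r a * g y + c a))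
    (hZ : 0 < μ {x ∈ Set.Icc (0 : ℝ) 1 | iteratedDerivWithin 2 f (Set.Icc 0 1) x = 0})
    (hconf : Measure.map f μ =
      ∑ a, ENNReal.ofReal (p a) • Measure.map (S a) (Measure.map f μ)) :
    ∃ l : List (Fin m), l ≠ [] ∧
      0 < Measure.map f μ
        {y ∈ f '' Set.Icc (0 : ℝ) 1 |
          iteratedDerivWithin 2 (wordComp S l) (f '' Set.Icc (0 : ℝ) 1) y = 0} :=
  stmt4_general m r c p hmaps hp hpsum μ hprob hna hsupp hinv f hf hf' g hg1 S hS hZ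
end

section
/- Let d ≥ 1 be an integer and let φ : [0,∞) → (0,1] satisfy φ(ξ) → 0 as ξ → ∞. Then there exists a dense G_δ set A ⊆ [0,1] such that for all t ∈ A, the d-fold product measure μ_t^d = μ_t × ⋯ × μ_t on ℝ^d is Rajchman (i.e. its Fourier transform μ̂_t^d(ξ) = ∫ e^{2πi⟨ξ,x⟩} dμ_t^d(x) tends to 0 as ‖ξ‖ → ∞) and limsup_{ξ → ∞} |μ̂_t^d((ξ, 0, …, 0))| / φ(ξ) > 0. -/
open MeasureTheory Filter Set
open scoped ENNReal NNReal

/-- The Fourier transform of a measure on `ℝ^d`: `ν̂(ξ) = ∫ e^{2πi⟨ξ,x⟩} dν(x)`. -/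
noncomputable def ftd {d : ℕ} (ν : Measure (Fin d → ℝ)) (ξ : Fin d → ℝ) : ℂ :=
  ∫ x, Complex.exp (((2 * Real.pi * ∑ i, ξ i * x i : ℝ) : ℂ) * Complex.I) ∂ν

/-- `μ_t` is invariant for the IFS `{x/10, (x+1)/10, (x+t)/10}` with weights `(1/3,1/3,1/3)`. -/
def muInv (t : ℝ) (μ : Measure ℝ) : Prop :=
  μ = (3 : ℝ≥0∞)⁻¹ • (Measure.map (fun x : ℝ => x / 10) μ +
    Measure.map (fun x : ℝ => (x + 1) / 10) μ + Measure.map (fun x : ℝ => (x + t) / 10) μ)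

open scoped Real FourierTransform Topology

/-!
The transform satisfies `μ̂(ξ) = g(ξ/10) μ̂(ξ/10)` with `g(u) = (1 + e(u) + e(tu))/3`, hence
`μ̂(10ᴷη) = μ̂(η) ∏_{k<K} g(10ᵏη)`.

Rajchman property: call `u` contracting if `u` or `tu` is at distance at least `1/20` from `ℤ`;
then `|g(u)| ≤ 1 - 1/300`. If none of the scales `10ᵏη`, `a ≤ k ≤ a + L`, is contracting, the
distances to `ℤ` shrink by a factor `10` from each scale to the previous one, so the integer
`n ≤ 2·10^(a+1)` nearest to `10ᵃη` satisfies `‖nt‖ ≲ 10^(-L)`. For irrational `t` this bounds `L`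
in terms of `a` alone, so the number of contracting scales below `10ᴷ` tends to infinity uniformly
in `η ∈ [1, 10)`.

Slow decay: if `|t - p/10ˢ| ≤ 10^(-m)` with `s ≤ m`, then `g(10ᵏ)` is within `O(10^(k-m))` of `1`
for `s ≤ k < m`, and `|g(n)| ≥ 1/3` for every integer `n`, so `|μ̂(10ᵐ)| ≥ 3^(-s)/8`. Choosing
`m = m(s, N) ≥ log₁₀ N` with `φ(10ᵐ) ≤ 3^(-s)/8`, the irrational `t` lying, for every `N`, within
`10^(-m(s,N))` of some `p/10ˢ` form a dense `G_δ` set.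
-/

namespace TenAdicIFS

noncomputable section

def distInt (x : ℝ) : ℝ := |x - round x|

lemma distInt_nonneg (x : ℝ) : 0 ≤ distInt x := abs_nonneg _

lemma fourierChar_intCast (n : ℤ) : (𝐞 n : ℂ) = 1 := by
  rw [Real.fourierChar_apply]
  convert Complex.exp_int_mul_two_pi_mul_I n using 2
  push_cast; ring

lemma fourierChar_add_intCast (x : ℝ) (n : ℤ) : (𝐞 (x + n) : ℂ) = 𝐞 x := by
  rw [AddChar.map_add_eq_mul, Circle.coe_mul, fourierChar_intCast, mul_one]

lemma norm_fourierChar_sub_one (x : ℝ) : ‖(𝐞 x : ℂ) - 1‖ = 2 * |Real.sin (π * x)| := by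
  rw [Real.fourierChar_apply, mul_comm, Complex.norm_exp_I_mul_ofReal_sub_one, norm_mul,
    Real.norm_eq_abs, Real.norm_eq_abs, abs_two]
  ring_nf

lemma norm_fourierChar_sub_one_le (x : ℝ) : ‖(𝐞 x : ℂ) - 1‖ ≤ 2 * π * |x| := by
  have := Real.norm_exp_I_mul_ofReal_sub_one_le (x := 2 * π * x)
  rwa [Real.norm_eq_abs, abs_mul, abs_of_pos Real.two_pi_pos, mul_comm, ← Real.fourierChar_apply]
    at this

/-- Jordan's inequality `sin y ≥ 2y/π` on `[0, π/2]`, applied at `y = π · distInt x`. -/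
lemma four_mul_distInt_le (x : ℝ) : 4 * distInt x ≤ ‖(𝐞 x : ℂ) - 1‖ := by
  have hx : (𝐞 x : ℂ) = 𝐞 (x - round x) := by
    rw [← fourierChar_add_intCast (x - round x) (round x), sub_add_cancel]
  have hr := abs_sub_round x
  have hsin : |Real.sin (π * (x - round x))| = Real.sin (π * distInt x) := by
    have h0 : 0 ≤ Real.sin (π * distInt x) :=
      Real.sin_nonneg_of_nonneg_of_le_pi (by unfold distInt; positivity)
        (by unfold distInt; nlinarith [Real.pi_pos])
    rw [← abs_of_nonneg h0, distInt]
    rcases abs_cases (x - round x) with ⟨h, -⟩ | ⟨h, -⟩ <;> rw [h]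
    rw [mul_neg, Real.sin_neg, abs_neg]
  have hjordan := Real.mul_le_sin (x := π * distInt x) (by unfold distInt; positivity)
    (by unfold distInt; nlinarith [Real.pi_pos])
  rw [hx, norm_fourierChar_sub_one, hsin]
  field_simp at hjordan
  linarith

lemma norm_one_add_le_of_norm_eq_one {z : ℂ} (hz : ‖z‖ = 1) :
    ‖1 + z‖ ≤ 2 - ‖z - 1‖ ^ 2 / 4 := by
  have h := parallelogram_law_with_norm ℝ (1 : ℂ) z
  rw [norm_sub_rev, norm_one, hz] at h
  nlinarith [sq_nonneg (‖1 + z‖ - 2)]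

lemma norm_one_add_fourierChar_le (x : ℝ) : ‖1 + (𝐞 x : ℂ)‖ ≤ 2 - 4 * distInt x ^ 2 := by
  have h := four_mul_distInt_le x
  have := norm_one_add_le_of_norm_eq_one (Circle.norm_coe (𝐞 x))
  nlinarith [distInt_nonneg x]

def symbol (t u : ℝ) : ℂ := (1 + 𝐞 u + 𝐞 (t * u)) / 3

lemma norm_symbol_le_one (t u : ℝ) : ‖symbol t u‖ ≤ 1 := by
  have := norm_add₃_le (a := (1 : ℂ)) (b := 𝐞 u) (c := 𝐞 (t * u))
  rw [symbol, norm_div, Complex.norm_ofNat]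
  simp only [norm_one, Circle.norm_coe] at this
  linarith

lemma norm_symbol_sub_one_le (t u : ℝ) (n m : ℤ) :
    ‖symbol t u - 1‖ ≤ 2 * π / 3 * (|u - n| + |t * u - m|) := by
  have hu := norm_fourierChar_sub_one_le (u - n)
  have htu := norm_fourierChar_sub_one_le (t * u - m)
  rw [← fourierChar_add_intCast (u - n) n, sub_add_cancel] at hu
  rw [← fourierChar_add_intCast (t * u - m) m, sub_add_cancel] at htu
  have h : symbol t u - 1 = ((𝐞 u - 1) + (𝐞 (t * u) - 1)) / 3 := by rw [symbol]; ring
  rw [h, norm_div, Complex.norm_ofNat]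
  have := norm_add_le ((𝐞 u : ℂ) - 1) (𝐞 (t * u) - 1)
  linarith

lemma norm_symbol_le_of_le_distInt {t u δ : ℝ} (hδ : 0 ≤ δ)
    (h : δ ≤ distInt u ∨ δ ≤ distInt (t * u)) : ‖symbol t u‖ ≤ 1 - 4 * δ ^ 2 / 3 := by
  have key : ∀ v w : ℝ, δ ≤ distInt v → ‖1 + (𝐞 v : ℂ) + 𝐞 w‖ ≤ 3 - 4 * δ ^ 2 := by
    intro v w hv
    have h1 := norm_add_le (1 + (𝐞 v : ℂ)) (𝐞 w)
    have h2 := norm_one_add_fourierChar_le v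
    rw [Circle.norm_coe] at h1
    nlinarith
  rw [symbol, norm_div, Complex.norm_ofNat, div_le_iff₀ (by norm_num)]
  rcases h with h | h
  · linarith [key u (t * u) h]
  · rw [add_right_comm]
    linarith [key (t * u) u h]

def IsContracting (t u : ℝ) : Prop := 1 / 20 ≤ distInt u ∨ 1 / 20 ≤ distInt (t * u)

lemma norm_symbol_le_of_isContracting {t u : ℝ} (h : IsContracting t u) :
    ‖symbol t u‖ ≤ 1 - 1 / 300 :=
  (norm_symbol_le_of_le_distInt (by norm_num) h).trans_eq (by norm_num)

lemma norm_symbol_intCast_ge (t : ℝ) (n : ℤ) : 1 / 3 ≤ ‖symbol t n‖ := by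
  have h := norm_sub_norm_le (2 : ℂ) (-𝐞 (t * n))
  rw [symbol, fourierChar_intCast, norm_div, Complex.norm_ofNat]
  rw [sub_neg_eq_add, norm_neg, Circle.norm_coe, Complex.norm_ofNat] at h
  rw [show (1 : ℂ) + 1 + 𝐞 (t * n) = 2 + 𝐞 (t * n) by ring]
  linarith

lemma one_sub_sum_le_norm_prod {ι R : Type*} [NormedCommRing R] [NormMulClass R] [NormOneClass R]
    (s : Finset ι) (z : ι → R) : 1 - ∑ i ∈ s, ‖z i - 1‖ ≤ ‖∏ i ∈ s, z i‖ := by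
  induction s using Finset.cons_induction with
  | empty => simp
  | cons a s ha ih =>
    rw [Finset.sum_cons, Finset.prod_cons, norm_mul]
    have hza : 1 - ‖z a - 1‖ ≤ ‖z a‖ := by
      have := norm_sub_norm_le (1 : R) (1 - z a)
      rw [norm_one, sub_sub_cancel, norm_sub_rev] at this
      linarith
    have hsum : 0 ≤ ∑ i ∈ s, ‖z i - 1‖ := Finset.sum_nonneg fun _ _ => norm_nonneg _
    rcases le_total ‖z a - 1‖ 1 with h | h
    · nlinarith [mul_le_mul_of_nonneg_right hza (norm_nonneg (∏ i ∈ s, z i)),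
        mul_le_mul_of_nonneg_left ih (sub_nonneg.2 h), mul_nonneg (norm_nonneg (z a - 1)) hsum]
    · nlinarith [mul_nonneg (norm_nonneg (z a)) (norm_nonneg (∏ i ∈ s, z i))]

lemma sum_range_pow_div_pow_le {b : ℝ} (hb : 1 < b) (m : ℕ) :
    ∑ k ∈ Finset.range m, b ^ k / b ^ m ≤ 1 / (b - 1) := by
  have hbm : 0 < b ^ m := pow_pos (by linarith) m
  rw [← Finset.sum_div, geom_sum_eq hb.ne', div_div, div_le_div_iff₀ (by positivity) (by linarith)]
  nlinarith

lemma one_sub_div_nine_le_norm_prod {R : Type*} [NormedCommRing R] [NormMulClass R]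
    [NormOneClass R] {m : ℕ} {s : Finset ℕ} (hs : s ⊆ Finset.range m) {z : ℕ → R} {c : ℝ}
    (hc : 0 ≤ c) (hz : ∀ k ∈ s, ‖z k - 1‖ ≤ c * (10 ^ k / 10 ^ m)) :
    1 - c / 9 ≤ ‖∏ k ∈ s, z k‖ := by
  have hsum : ∑ k ∈ s, ‖z k - 1‖ ≤ c / 9 :=
    calc ∑ k ∈ s, ‖z k - 1‖ ≤ ∑ k ∈ s, c * ((10 : ℝ) ^ k / 10 ^ m) := Finset.sum_le_sum hz
      _ ≤ ∑ k ∈ Finset.range m, c * ((10 : ℝ) ^ k / 10 ^ m) :=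
        Finset.sum_le_sum_of_subset_of_nonneg hs fun _ _ _ => by positivity
      _ ≤ c * (1 / (10 - 1)) := by
        rw [← Finset.mul_sum]
        exact mul_le_mul_of_nonneg_left (sum_range_pow_div_pow_le (by norm_num) m) hc
      _ = c / 9 := by ring
  linarith [one_sub_sum_le_norm_prod s z]

lemma norm_prod_le_pow_card {ι R : Type*} [NormedCommRing R] [NormMulClass R] [NormOneClass R]
    {S s : Finset ι} (hs : s ⊆ S) {f : ι → R} {q : ℝ} (h1 : ∀ i ∈ S, ‖f i‖ ≤ 1)
    (hq : ∀ i ∈ s, ‖f i‖ ≤ q) : ‖∏ i ∈ S, f i‖ ≤ q ^ s.card := by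
  classical
  rw [norm_prod, ← Finset.prod_sdiff hs, ← Finset.prod_const]
  calc (∏ i ∈ S \ s, ‖f i‖) * ∏ i ∈ s, ‖f i‖ ≤ 1 * ∏ i ∈ s, q :=
        mul_le_mul
          (Finset.prod_le_one (fun i _ => norm_nonneg _) fun i hi => h1 i (Finset.mem_sdiff.1 hi).1)
          (Finset.prod_le_prod (fun i _ => norm_nonneg _) hq)
          (Finset.prod_nonneg fun i _ => norm_nonneg _) zero_le_one
    _ = ∏ i ∈ s, q := one_mul _

lemma charFun_add_measure {E : Type*} [SeminormedAddCommGroup E] [InnerProductSpace ℝ E]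
    [MeasurableSpace E] [OpensMeasurableSpace E] {ν₁ ν₂ : Measure E} [IsFiniteMeasure ν₁]
    [IsFiniteMeasure ν₂] (s : E) : charFun (ν₁ + ν₂) s = charFun ν₁ s + charFun ν₂ s := by
  simp only [charFun_eq_integral_innerProbChar]
  exact integral_add_measure ((BoundedContinuousFunction.innerProbChar s).integrable ν₁)
    ((BoundedContinuousFunction.innerProbChar s).integrable ν₂)

lemma charFun_smul_measure {E : Type*} [SeminormedAddCommGroup E] [InnerProductSpace ℝ E]
    [MeasurableSpace E] {ν : Measure E} (c : ℝ≥0∞) (s : E) :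
    charFun (c • ν) s = c.toReal • charFun ν s := by
  simp only [charFun_apply, integral_smul_measure]

lemma charFun_map_add_div {ν : Measure ℝ} (c s : ℝ) :
    charFun (ν.map fun x => (x + c) / 10) s =
      Complex.exp (↑(c * (s / 10)) * Complex.I) * charFun ν (s / 10) := by
  have : (fun x : ℝ => (x + c) / 10) = fun x => 10⁻¹ * (x + c) := by
    funext x; ring
  rw [this, charFun_map_mul_comp (by fun_prop), charFun_map_add_const, mul_comm, inv_mul_eq_div]
  simp [mul_comm]

def fourierStieltjes (μ : Measure ℝ) (ξ : ℝ) : ℂ := charFun μ (2 * π * ξ)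

lemma norm_fourierStieltjes_neg (μ : Measure ℝ) (ξ : ℝ) :
    ‖fourierStieltjes μ (-ξ)‖ = ‖fourierStieltjes μ ξ‖ := by
  rw [fourierStieltjes, mul_neg, charFun_neg, Complex.norm_conj, fourierStieltjes]

section FourierStieltjes

variable {μ : Measure ℝ} [IsProbabilityMeasure μ]

lemma norm_fourierStieltjes_le_one (ξ : ℝ) : ‖fourierStieltjes μ ξ‖ ≤ 1 :=
  norm_charFun_le_one _

lemma fourierStieltjes_zero : fourierStieltjes μ 0 = 1 := by
  simp [fourierStieltjes, charFun_zero]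

lemma continuous_fourierStieltjes : Continuous (fourierStieltjes μ) :=
  continuous_charFun.comp (continuous_const.mul continuous_id)

lemma fourierStieltjes_eq_symbol_mul {t : ℝ} (hμ : muInv t μ) (ξ : ℝ) :
    fourierStieltjes μ ξ = symbol t (ξ / 10) * fourierStieltjes μ (ξ / 10) := by
  have h0 := charFun_map_add_div (ν := μ) 0 (2 * π * ξ)
  simp only [add_zero, zero_mul, Complex.ofReal_zero, Complex.exp_zero, one_mul] at h0
  rw [fourierStieltjes]
  nth_rw 1 [hμ]
  rw [charFun_smul_measure, charFun_add_measure, charFun_add_measure, h0,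
    charFun_map_add_div, charFun_map_add_div, symbol]
  simp only [Real.fourierChar_apply, fourierStieltjes, ENNReal.toReal_inv, Complex.real_smul,
    ENNReal.toReal_ofNat]
  push_cast
  ring_nf

lemma fourierStieltjes_pow_mul {t : ℝ} (hμ : muInv t μ) (K : ℕ) (η : ℝ) :
    fourierStieltjes μ (10 ^ K * η) =
      fourierStieltjes μ η * ∏ k ∈ Finset.range K, symbol t (10 ^ k * η) := by
  induction K with
  | zero => simp
  | succ K ih =>
    have h : (10 : ℝ) ^ (K + 1) * η / 10 = 10 ^ K * η := by ring
    rw [fourierStieltjes_eq_symbol_mul hμ, h, ih, Finset.prod_range_succ]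
    ring

end FourierStieltjes

lemma ftd_pi_eq_prod {d : ℕ} (μ : Measure ℝ) [SigmaFinite μ] (ξ : Fin d → ℝ) :
    ftd (Measure.pi fun _ : Fin d => μ) ξ = ∏ i, fourierStieltjes μ (ξ i) := by
  have h : ∀ x : Fin d → ℝ, Complex.exp (((2 * π * ∑ i, ξ i * x i : ℝ) : ℂ) * Complex.I) =
      ∏ i, Complex.exp (↑(2 * π * ξ i) * ↑(x i) * Complex.I) := by
    intro x
    rw [← Complex.exp_sum]
    push_cast
    rw [Finset.mul_sum, Finset.sum_mul]
    congr 1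
    exact Finset.sum_congr rfl fun i _ => by ring
  simp only [ftd, h, fourierStieltjes, charFun_apply_real]
  exact integral_fintype_prod_eq_prod (μ := fun _ => μ)
    (fun i (y : ℝ) => Complex.exp (↑(2 * π * ξ i) * y * Complex.I))

lemma ftd_pi_ite_eq {d : ℕ} (hd : 1 ≤ d) (μ : Measure ℝ) [IsProbabilityMeasure μ] (ξ : ℝ) :
    ftd (Measure.pi fun _ : Fin d => μ) (fun i => if (i : ℕ) = 0 then ξ else 0) =
      fourierStieltjes μ ξ := by
  rw [ftd_pi_eq_prod, Finset.prod_eq_single ⟨0, hd⟩ (fun j _ hj => ?_) (by simp)]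
  · simp
  · rw [if_neg (fun h => hj (Fin.ext h)), fourierStieltjes_zero]

section LowerBound

variable {μ : Measure ℝ} [IsProbabilityMeasure μ] {t : ℝ}

lemma quarter_le_norm_fourierStieltjes_one (hμ : muInv t μ) (ht : |t| ≤ 1) :
    1 / 4 ≤ ‖fourierStieltjes μ 1‖ := by
  have hlim : Tendsto (fun K : ℕ => fourierStieltjes μ (1 / 10 ^ K)) atTop (𝓝 1) := by
    rw [← fourierStieltjes_zero (μ := μ)]
    exact (continuous_fourierStieltjes.tendsto 0).comp <| tendsto_const_nhds.div_atTop
      (tendsto_pow_atTop_atTop_of_one_lt (by norm_num))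
  obtain ⟨K, hK⟩ := ((continuous_norm.tendsto _).comp hlim |>.eventually
    (lt_mem_nhds (show (1 / 2 : ℝ) < ‖(1 : ℂ)‖ by norm_num))).exists
  have hprod : 1 - 4 * π / 3 / 9 ≤ ‖∏ k ∈ Finset.range K, symbol t (10 ^ k * (1 / 10 ^ K))‖ := by
    refine one_sub_div_nine_le_norm_prod subset_rfl (by positivity) fun k _ => ?_
    have hu : |(10 : ℝ) ^ k * (1 / 10 ^ K)| = 10 ^ k / 10 ^ K := by
      rw [abs_of_pos (by positivity), mul_one_div]
    have := norm_symbol_sub_one_le t (10 ^ k * (1 / 10 ^ K)) 0 0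
    rw [Int.cast_zero, sub_zero, sub_zero, abs_mul t, hu] at this
    have hle : |t| * (10 ^ k / 10 ^ K) ≤ 10 ^ k / 10 ^ K :=
      mul_le_of_le_one_left (by positivity) ht
    nlinarith [Real.pi_pos]
  have h1 : (10 : ℝ) ^ K * (1 / 10 ^ K) = 1 := by field_simp
  rw [← h1, fourierStieltjes_pow_mul hμ, h1, norm_mul]
  simp only [Function.comp_apply] at hK
  nlinarith [Real.pi_lt_d2, norm_nonneg (∏ k ∈ Finset.range K, symbol t (10 ^ k * (1 / 10 ^ K)))]

lemma norm_fourierStieltjes_pow_ge (hμ : muInv t μ) (ht : |t| ≤ 1) {s m : ℕ} (hsm : s ≤ m)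
    {p : ℤ} (hp : |t - p / 10 ^ s| ≤ 1 / 10 ^ m) :
    (1 / 3) ^ s / 8 ≤ ‖fourierStieltjes μ (10 ^ m)‖ := by
  have hhead : (1 / 3 : ℝ) ^ s ≤ ‖∏ k ∈ Finset.range s, symbol t (10 ^ k)‖ := by
    rw [norm_prod, show (1 / 3 : ℝ) ^ s = ∏ _k ∈ Finset.range s, 1 / 3 by simp]
    refine Finset.prod_le_prod (fun _ _ => by norm_num) fun k _ => ?_
    simpa using norm_symbol_intCast_ge t (10 ^ k)
  have htail : 1 - 2 * π / 3 / 9 ≤ ‖∏ k ∈ Finset.Ico s m, symbol t (10 ^ k)‖ := by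
    refine one_sub_div_nine_le_norm_prod (m := m) (fun k hk => by simp at hk ⊢; omega)
      (by positivity) fun k hk => ?_
    have hks : (10 : ℝ) ^ k = 10 ^ (k - s) * 10 ^ s := by
      rw [← pow_add, Nat.sub_add_cancel (Finset.mem_Ico.1 hk).1]
    have hdiff : t * 10 ^ k - ((p * 10 ^ (k - s) : ℤ) : ℝ) = 10 ^ k * (t - p / 10 ^ s) := by
      push_cast
      rw [hks]
      field_simp
    have := norm_symbol_sub_one_le t (10 ^ k) (10 ^ k) (p * 10 ^ (k - s))
    push_cast at this hdiff
    rw [hdiff, sub_self, abs_zero, zero_add, abs_mul, abs_of_pos (by positivity)] at this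
    calc _ ≤ _ := this
      _ ≤ 2 * π / 3 * (10 ^ k * (1 / 10 ^ m)) := by gcongr
      _ = 2 * π / 3 * (10 ^ k / 10 ^ m) := by ring
  have h := fourierStieltjes_pow_mul hμ m 1
  simp only [mul_one] at h
  rw [h, ← Finset.prod_range_mul_prod_Ico _ hsm, norm_mul, norm_mul]
  have h1 := quarter_le_norm_fourierStieltjes_one hμ ht
  have h3 : (0 : ℝ) ≤ (1 / 3) ^ s := by positivity
  nlinarith [Real.pi_lt_d2, norm_nonneg (∏ k ∈ Finset.Ico s m, symbol t (10 ^ k)),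
    mul_le_mul h1 hhead h3 (norm_nonneg _)]

end LowerBound

lemma distInt_ten_mul {x : ℝ} (hx : distInt x < 1 / 20) (h10x : distInt (10 * x) < 1 / 20) :
    distInt (10 * x) = 10 * distInt x := by
  unfold distInt at *
  have hround : round (10 * x) = 10 * round x := by
    have h1 : |(round (10 * x) : ℝ) - 10 * round x| < 1 := by
      rw [show (round (10 * x) : ℝ) - 10 * round x
          = 10 * (x - round x) - (10 * x - round (10 * x)) by ring]
      calc _ ≤ |10 * (x - round x)| + |10 * x - round (10 * x)| := abs_sub _ _
        _ < 1 := by rw [abs_mul, abs_of_pos (by norm_num : (0 : ℝ) < 10)]; linarith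
    rw [abs_lt] at h1
    have h2 : round (10 * x) - 10 * round x < 1 := by exact_mod_cast h1.2
    have h3 : -1 < round (10 * x) - 10 * round x := by exact_mod_cast h1.1
    omega
  rw [hround, Int.cast_mul, Int.cast_ofNat, ← mul_sub, abs_mul, abs_of_pos (by norm_num)]

lemma distInt_le_of_forall_distInt_pow_mul_lt (L : ℕ) {x : ℝ}
    (h : ∀ k ≤ L, distInt (10 ^ k * x) < 1 / 20) : distInt x ≤ 1 / (20 * 10 ^ L) := by
  induction L generalizing x with
  | zero => simpa using (h 0 le_rfl).le
  | succ L ih =>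
    have h10x : distInt (10 * x) ≤ 1 / (20 * 10 ^ L) :=
      ih fun k hk => by simpa [pow_succ, mul_assoc] using h (k + 1) (by omega)
    rw [distInt_ten_mul (by simpa using h 0 (by omega)) (by simpa using h 1 (by omega))] at h10x
    rw [pow_succ]
    calc distInt x = 10 * distInt x / 10 := by ring
      _ ≤ 1 / (20 * 10 ^ L) / 10 := by gcongr
      _ = 1 / (20 * (10 ^ L * 10)) := by ring

lemma exists_int_distInt_mul_le {t x : ℝ} (hx : 1 ≤ x) (L : ℕ)
    (h : ∀ k ≤ L, ¬IsContracting t (10 ^ k * x)) :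
    ∃ n : ℤ, 1 ≤ n ∧ (n : ℝ) ≤ x + 1 / 2 ∧ distInt (t * n) ≤ (1 + |t|) / (20 * 10 ^ L) := by
  replace h : ∀ k ≤ L, distInt (10 ^ k * x) < 1 / 20 ∧ distInt (t * (10 ^ k * x)) < 1 / 20 :=
    fun k hk => by simpa [IsContracting, not_or] using h k hk
  have hdx := distInt_le_of_forall_distInt_pow_mul_lt L fun k hk => (h k hk).1
  have hdtx := distInt_le_of_forall_distInt_pow_mul_lt L (x := t * x) fun k hk => by
    simpa [mul_left_comm] using (h k hk).2
  have hr := abs_sub_round x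
  rw [abs_le] at hr
  refine ⟨round x, ?_, by linarith, ?_⟩
  · have : (0 : ℝ) < round x := by linarith
    exact_mod_cast this
  · calc distInt (t * round x) ≤ |t * round x - round (t * x)| := round_le _ _
      _ = |(t * x - round (t * x)) - t * (x - round x)| := by ring_nf
      _ ≤ distInt (t * x) + |t| * distInt x := by
        rw [distInt, distInt, ← abs_mul]; exact abs_sub _ _
      _ ≤ 1 / (20 * 10 ^ L) + |t| * (1 / (20 * 10 ^ L)) := by gcongr
      _ = (1 + |t|) / (20 * 10 ^ L) := by ring

lemma exists_isContracting_of_irrational {t : ℝ} (hirr : Irrational t) (a : ℕ) :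
    ∃ ℓ : ℕ, ∀ η ∈ Ico (1 : ℝ) 10, ∃ k ∈ Finset.Icc a (a + ℓ), IsContracting t (10 ^ k * η) := by
  set M : ℤ := 2 * 10 ^ (a + 1)
  have hlim : Tendsto (fun ℓ : ℕ => (1 + |t|) / (20 * 10 ^ ℓ)) atTop (𝓝 0) :=
    tendsto_const_nhds.div_atTop
      ((tendsto_pow_atTop_atTop_of_one_lt (by norm_num)).const_mul_atTop (by norm_num))
  have hpos : ∀ n ∈ Finset.Icc 1 M, 0 < distInt (t * n) := fun n hn => by
    have hn0 : n ≠ 0 := by have := (Finset.mem_Icc.1 hn).1; omega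
    exact abs_pos.2 (sub_ne_zero.2 ((hirr.mul_intCast hn0).ne_int _))
  obtain ⟨ℓ, hℓ⟩ := ((Finset.eventually_all _).2 fun n hn =>
    hlim.eventually (gt_mem_nhds (hpos n hn))).exists
  refine ⟨ℓ, fun η hη => ?_⟩
  by_contra! hgood
  have hx : (1 : ℝ) ≤ 10 ^ a * η := one_le_mul_of_one_le_of_one_le (one_le_pow₀ (by norm_num)) hη.1
  obtain ⟨n, hn1, hnx, hdist⟩ := exists_int_distInt_mul_le hx ℓ fun k hk => by
    simpa [← mul_assoc, ← pow_add, add_comm k] using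
      hgood (a + k) (Finset.mem_Icc.2 ⟨by omega, by omega⟩)
  have hnM : n ≤ M := by
    have : (n : ℝ) ≤ M := by
      have := hη.2
      push_cast [M]
      rw [pow_succ]
      nlinarith [one_le_pow₀ (M₀ := ℝ) (a := 10) (n := a) (by norm_num)]
    exact_mod_cast this
  exact (hℓ n (Finset.mem_Icc.2 ⟨hn1, hnM⟩)).not_ge hdist

lemma exists_subset_range_card_eq (ℓ : ℕ → ℕ) (N : ℕ) :
    ∃ K₀, ∀ p : ℕ → Prop, (∀ a, ∃ k ∈ Finset.Icc a (a + ℓ a), p k) →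
      ∀ K, K₀ ≤ K → ∃ s ⊆ Finset.range K, s.card = N ∧ ∀ k ∈ s, p k := by
  induction N with
  | zero => exact ⟨0, fun p _ K _ => ⟨∅, Finset.empty_subset _, rfl, by simp⟩⟩
  | succ N ih =>
    obtain ⟨K₀, hK₀⟩ := ih
    refine ⟨K₀ + ℓ K₀ + 1, fun p hp K hK => ?_⟩
    obtain ⟨k, hk, hpk⟩ := hp K₀
    obtain ⟨s, hs, hcard, hps⟩ := hK₀ p hp K₀ le_rfl
    rw [Finset.mem_Icc] at hk
    have hks : k ∉ s := fun h => by simpa using (Finset.mem_range.1 (hs h)).trans_le hk.1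
    refine ⟨insert k s, Finset.insert_subset (Finset.mem_range.2 (by omega))
      (hs.trans (Finset.range_subset_range.2 (by omega))),
      by rw [Finset.card_insert_of_notMem hks, hcard],
      (Finset.forall_mem_insert _ _ _).2 ⟨hpk, hps⟩⟩

section Rajchman

variable {μ : Measure ℝ} [IsProbabilityMeasure μ] {t : ℝ}

lemma tendsto_fourierStieltjes_atTop (hμ : muInv t μ) (hirr : Irrational t) :
    Tendsto (fourierStieltjes μ) atTop (𝓝 0) := by
  set q : ℝ := 1 - 1 / 300
  rw [Metric.tendsto_atTop]
  intro ε hε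
  obtain ⟨N, hN⟩ := exists_pow_lt_of_lt_one hε (show q < 1 by norm_num [q])
  choose ℓ hℓ using exists_isContracting_of_irrational hirr
  obtain ⟨K₀, hK₀⟩ := exists_subset_range_card_eq ℓ N
  refine ⟨10 ^ K₀, fun ξ hξ => ?_⟩
  obtain ⟨K, hK, hK'⟩ := exists_nat_pow_near (le_trans (one_le_pow₀ (by norm_num)) hξ)
    (by norm_num : (1 : ℝ) < 10)
  have hpos : (0 : ℝ) < 10 ^ K := by positivity
  set η := ξ / 10 ^ K
  have hη : η ∈ Ico (1 : ℝ) 10 :=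
    ⟨(le_div_iff₀ hpos).2 (by linarith), (div_lt_iff₀ hpos).2 (by rw [pow_succ] at hK'; linarith)⟩
  have hKK₀ : K₀ ≤ K := by
    have := (pow_lt_pow_iff_right₀ (by norm_num : (1 : ℝ) < 10)).1 (hξ.trans_lt hK')
    omega
  obtain ⟨s, hs, hcard, hbad⟩ := hK₀ _ (fun a => hℓ a η hη) K hKK₀
  have hξη : ξ = 10 ^ K * η := (mul_div_cancel₀ ξ hpos.ne').symm
  rw [dist_zero_right, hξη, fourierStieltjes_pow_mul hμ, norm_mul]
  calc _ ≤ 1 * ‖∏ k ∈ Finset.range K, symbol t (10 ^ k * η)‖ := by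
        gcongr; exact norm_fourierStieltjes_le_one η
    _ ≤ q ^ s.card := by
        rw [one_mul]
        exact norm_prod_le_pow_card hs (fun k _ => norm_symbol_le_one t _)
          fun k hk => norm_symbol_le_of_isContracting (hbad k hk)
    _ < ε := hcard ▸ hN

lemma tendsto_fourierStieltjes_cocompact (hμ : muInv t μ) (hirr : Irrational t) :
    Tendsto (fourierStieltjes μ) (cocompact ℝ) (𝓝 0) := by
  rw [cocompact_eq_atBot_atTop, tendsto_sup, tendsto_zero_iff_norm_tendsto_zero]
  refine ⟨?_, tendsto_fourierStieltjes_atTop hμ hirr⟩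
  have hneg : (fun ξ => ‖fourierStieltjes μ ξ‖) = (fun ξ => ‖fourierStieltjes μ ξ‖) ∘ Neg.neg :=
    funext fun ξ => (norm_fourierStieltjes_neg μ ξ).symm
  rw [hneg]
  exact (tendsto_zero_iff_norm_tendsto_zero.1 (tendsto_fourierStieltjes_atTop hμ hirr)).comp
    tendsto_neg_atBot_atTop

end Rajchman

lemma tendsto_prod_apply_cocompact {ι X R : Type*} [Fintype ι] [TopologicalSpace X]
    [NormedCommRing R] [NormMulClass R] [NormOneClass R] {f : X → R} (hf1 : ∀ x, ‖f x‖ ≤ 1)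
    (hf : Tendsto f (cocompact X) (𝓝 0)) :
    Tendsto (fun ξ : ι → X => ∏ i, f (ξ i)) (cocompact (ι → X)) (𝓝 0) := by
  rw [← Filter.coprodᵢ_cocompact, Filter.coprodᵢ, tendsto_iSup]
  intro i
  refine squeeze_zero_norm (fun ξ => ?_) ((tendsto_norm_zero.comp hf).comp tendsto_comap)
  classical
  rw [← Finset.mul_prod_erase _ _ (Finset.mem_univ i), norm_mul, norm_prod]
  exact mul_le_of_le_one_right (norm_nonneg _)
    (Finset.prod_le_one (fun _ _ => norm_nonneg _) fun j _ => hf1 _)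

def decimalApprox (r : ℕ → ℝ) : Set ℝ := ⋃ (s : ℕ) (p : ℤ), Metric.ball ((p : ℝ) / 10 ^ s) (r s)

lemma isOpen_decimalApprox (r : ℕ → ℝ) : IsOpen (decimalApprox r) :=
  isOpen_iUnion fun _ => isOpen_iUnion fun _ => Metric.isOpen_ball

lemma dense_decimalApprox {r : ℕ → ℝ} (hr : ∀ s, 0 < r s) : Dense (decimalApprox r) := by
  refine Metric.dense_iff.2 fun x ε hε => ?_
  obtain ⟨s, hs⟩ := exists_pow_lt_of_lt_one hε (by norm_num : (1 / 10 : ℝ) < 1)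
  have hpos : (0 : ℝ) < 10 ^ s := by positivity
  refine ⟨⌊x * 10 ^ s⌋ / 10 ^ s, ?_, mem_iUnion₂.2 ⟨s, ⌊x * 10 ^ s⌋, Metric.mem_ball_self (hr s)⟩⟩
  have hlow : (⌊x * 10 ^ s⌋ : ℝ) / 10 ^ s ≤ x := (div_le_iff₀ hpos).2 (Int.floor_le _)
  have hupp : x < (⌊x * 10 ^ s⌋ : ℝ) / 10 ^ s + 1 / 10 ^ s := by
    rw [← add_div, lt_div_iff₀ hpos]
    exact Int.lt_floor_add_one _
  rw [one_div_pow] at hs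
  rw [Metric.mem_ball, Real.dist_eq, abs_lt]
  constructor <;> linarith

lemma Icc_subset_closure_Icc_inter {a b : ℝ} (hab : a ≠ b) {D : Set ℝ} (hD : Dense D) :
    Icc a b ⊆ closure (Icc a b ∩ D) :=
  calc Icc a b = closure (Ioo a b) := (closure_Ioo hab).symm
    _ ⊆ closure (Ioo a b ∩ D) :=
      closure_minimal (hD.open_subset_closure_inter isOpen_Ioo) isClosed_closure
    _ ⊆ closure (Icc a b ∩ D) := closure_mono (inter_subset_inter_left _ Ioo_subset_Icc_self)

lemma exists_scale_le {φ : ℝ → ℝ} (hφ0 : Tendsto φ atTop (𝓝 0)) {c : ℝ} (hc : 0 < c) (s N : ℕ) :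
    ∃ m : ℕ, s ≤ m ∧ (N : ℝ) ≤ 10 ^ m ∧ φ (10 ^ m) ≤ c :=
  ((eventually_ge_atTop s).and <|
    (tendsto_pow_atTop_atTop_of_one_lt (by norm_num : (1 : ℝ) < 10)).eventually
      ((eventually_ge_atTop (N : ℝ)).and (hφ0.eventually (ge_mem_nhds hc)))).exists

end

end TenAdicIFS

open TenAdicIFS

theorem stmt10_general (d : ℕ) (hd : 1 ≤ d) (φ : ℝ → ℝ)
    (hφ0 : Tendsto φ atTop (nhds 0)) :
    ∃ A : Set ℝ, A ⊆ Set.Icc 0 1 ∧ IsGδ A ∧ Set.Icc (0 : ℝ) 1 ⊆ closure A ∧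
      ∀ t ∈ A, ∀ μ : Measure ℝ, IsProbabilityMeasure μ → muInv t μ →
        Tendsto (ftd (Measure.pi fun _ : Fin d => μ)) (cocompact (Fin d → ℝ)) (nhds 0) ∧
        ∃ C > 0, ∃ᶠ ξ : ℝ in atTop,
          C * φ ξ ≤ ‖
            (ftd (Measure.pi fun _ : Fin d => μ) (fun i => if (i : ℕ) = 0 then ξ else 0))‖ := by
  choose m hsm hNm hφm using fun s =>
    exists_scale_le hφ0 (by positivity : (0 : ℝ) < (1 / 3) ^ s / 8) s
  set U : ℕ → Set ℝ := fun N => decimalApprox fun s => 1 / 10 ^ m s N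
  set D := {t : ℝ | Irrational t} ∩ ⋂ N, U N
  have hUopen : ∀ N, IsOpen (U N) := fun N => isOpen_decimalApprox _
  have hUGδ : IsGδ (⋂ N, U N) := IsGδ.iInter fun N => (hUopen N).isGδ
  have hDGδ : IsGδ D := IsGδ.setOfPred_irrational.inter hUGδ
  have hD : Dense D := dense_irrational.inter_of_Gδ IsGδ.setOfPred_irrational hUGδ
    (dense_iInter_of_isOpen hUopen fun N => dense_decimalApprox fun s => by positivity)
  refine ⟨Icc 0 1 ∩ D, inter_subset_left, isClosed_Icc.isGδ.inter hDGδ,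
    Icc_subset_closure_Icc_inter zero_ne_one hD, ?_⟩
  rintro t ⟨ht, hirr, htU⟩ μ _ hμ
  have ht1 : |t| ≤ 1 := abs_le.2 ⟨by linarith [ht.1], ht.2⟩
  refine ⟨?_, 1, one_pos, frequently_atTop.2 fun b => ?_⟩
  · simp_rw [funext (ftd_pi_eq_prod μ)]
    exact tendsto_prod_apply_cocompact norm_fourierStieltjes_le_one
      (tendsto_fourierStieltjes_cocompact hμ hirr)
  obtain ⟨s, p, hp⟩ := mem_iUnion₂.1 (mem_iInter.1 htU ⌈b⌉₊)
  refine ⟨10 ^ m s ⌈b⌉₊, (Nat.le_ceil b).trans (hNm s _), ?_⟩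
  rw [ftd_pi_ite_eq hd, one_mul]
  exact (hφm s _).trans (norm_fourierStieltjes_pow_ge hμ ht1 (hsm s _)
    (by rw [← Real.dist_eq]; exact (Metric.mem_ball.1 hp).le))

/-- For every `d ≥ 1` and `φ : [0,∞) → (0,1]` tending to `0`, there is a dense `G_δ` set
`A ⊆ [0,1]` such that for all `t ∈ A` the product measure `μ_t^d` is Rajchman and
`limsup_{ξ→∞} |μ̂_t^d((ξ,0,…,0))| / φ(ξ) > 0`. -/
theorem stmt10 (d : ℕ) (hd : 1 ≤ d) (φ : ℝ → ℝ)
    (hφ : ∀ ξ : ℝ, 0 ≤ ξ → φ ξ ∈ Set.Ioc (0 : ℝ) 1)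
    (hφ0 : Tendsto φ atTop (nhds 0)) :
    ∃ A : Set ℝ, A ⊆ Set.Icc 0 1 ∧ IsGδ A ∧ Set.Icc (0 : ℝ) 1 ⊆ closure A ∧
      ∀ t ∈ A, ∀ μ : Measure ℝ, IsProbabilityMeasure μ → muInv t μ →
        Tendsto (ftd (Measure.pi fun _ : Fin d => μ)) (cocompact (Fin d → ℝ)) (nhds 0) ∧
        ∃ C > 0, ∃ᶠ ξ : ℝ in atTop,
          C * φ ξ ≤ ‖
            (ftd (Measure.pi fun _ : Fin d => μ) (fun i => if (i : ℕ) = 0 then ξ else 0))‖ :=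
  stmt10_general d hd φ hφ0
end

section
/- Let μ be a self-similar measure on ℝ. Then there exist real numbers s_F, s_M with 0 < s_F ≤ s_M < ∞ and a constant C ≥ 1 such that for all x in the topological support of μ, all y ∈ ℝ, and all 0 < r ≤ 1: μ((x − r, x + r)) ≥ C⁻¹ r^{s_M} and μ((y − r, y + r)) ≤ C r^{s_F}. -/
open MeasureTheory Filter Set
open scoped ENNReal NNReal

/-- The topological support of a measure on `ℝ`. -/
def msupport (μ : Measure ℝ) : Set ℝ := {x | ∀ ε > 0, 0 < μ (Metric.ball x ε)}

/-!
Iterating the self-similarity along the stopping-time cut set of scale `t` writes `μ` as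
`∑ p_w (S_w)_* μ` over words `w` whose ratios `r_w` lie in `[θ t, t]`. The maps contract, so
`supp μ` is bounded, and it has two points since `μ` has no atoms; hence balls of some radius
`δ` carry mass at most some `γ < 1`.

Lower bound: at scale `t ≈ ρ` some piece `S_w (supp μ)`, of diameter `≤ ρ / 2`, meets
`ball x (ρ / 2)`, so it lies in `ball x ρ` and `μ (ball x ρ) ≥ p_w ≥ r_w ^ s ≳ ρ ^ s` for any `s`
with `|r_a| ^ s ≤ p_a`.
Upper bound: at scale `t ≈ ρ / δ` each piece meets `ball x ρ` in the image of a ball of radius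
`≤ δ`, of mass `≤ γ`, and every piece meeting `ball x ρ` lies in `ball x (K ρ)`. So
`μ (ball x ρ) ≤ γ μ (ball x (K ρ))`, and iterating gives `μ (ball x ρ) ≲ ρ ^ (log γ⁻¹ / log K)`.
-/

open Metric Topology

lemma msupport_eq_support (μ : Measure ℝ) : msupport μ = μ.support := by
  ext x
  exact nhds_basis_ball.mem_measureSupport.symm

lemma exists_mem_msupport_of_measure_ne_zero {μ : Measure ℝ} {s : Set ℝ} (h : μ s ≠ 0) :
    ∃ z ∈ s, z ∈ msupport μ := by
  rw [msupport_eq_support]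
  exact Measure.nonempty_inter_support_of_pos (pos_iff_ne_zero.2 h)

section ProbabilityMeasure

variable {μ : Measure ℝ} [IsProbabilityMeasure μ]

lemma measure_eq_one_of_msupport_subset {s : Set ℝ} (h : msupport μ ⊆ s) : μ s = 1 := by
  have hcompl : μ sᶜ = 0 := by
    rw [msupport_eq_support] at h
    exact measure_mono_null (compl_subset_compl.2 h) Measure.measure_compl_support
  refine le_antisymm prob_le_one ?_
  simpa [hcompl] using measure_univ_le_add_compl (μ := μ) s

lemma nontrivial_msupport [NullSingletonClass μ] : (msupport μ).Nontrivial := by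
  by_contra h
  have h1 := measure_eq_one_of_msupport_subset (μ := μ) subset_rfl
  rw [(not_nontrivial_iff.1 h).measure_zero μ] at h1
  exact zero_ne_one h1

lemma exists_measure_ball_le_lt_one [NullSingletonClass μ] :
    ∃ δ > 0, ∃ γ : ℝ, 0 < γ ∧ γ < 1 ∧ ∀ x ρ, ρ ≤ δ → μ (ball x ρ) ≤ ENNReal.ofReal γ := by
  obtain ⟨u, hu, v, hv, huv⟩ := nontrivial_msupport (μ := μ)
  set δ := dist u v / 4
  have hδ : 0 < δ := by have := dist_pos.2 huv; positivity
  set γ₀ := 1 - min (μ (ball u δ)) (μ (ball v δ))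
  have hγ₀ : γ₀ < 1 :=
    ENNReal.sub_lt_self ENNReal.one_ne_top one_ne_zero (lt_min (hu δ hδ) (hv δ hδ)).ne'
  obtain ⟨γ, -, hγ₀γ, hγ1⟩ := ENNReal.lt_iff_exists_real_btwn.1 hγ₀
  refine ⟨δ, hδ, γ, ENNReal.ofReal_pos.1 (pos_of_gt hγ₀γ),
    ENNReal.ofReal_lt_one.1 hγ1, fun x ρ hρ => ?_⟩
  -- a ball of radius at most `δ` misses `ball u δ` or `ball v δ`, which carry mass `≥ 1 - γ₀`
  have far : ∀ y, 2 * δ ≤ dist x y → μ (ball x ρ) ≤ 1 - μ (ball y δ) := fun y hy => by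
    rw [← prob_compl_eq_one_sub measurableSet_ball]
    exact measure_mono (ball_disjoint_ball (by linarith)).subset_compl_right
  refine le_trans ?_ hγ₀γ.le
  rcases le_or_gt (2 * δ) (dist x u) with hxu | hxu
  · exact (far u hxu).trans (tsub_le_tsub_left (min_le_left _ _) 1)
  · have hxv : 2 * δ ≤ dist x v := by
      linarith [dist_triangle_left u v x, show dist u v = 4 * δ by ring]
    exact (far v hxv).trans (tsub_le_tsub_left (min_le_right _ _) 1)

end ProbabilityMeasure

lemma le_ofReal_rpow_of_le_mul_comp_mul {f : ℝ → ℝ≥0∞} {γ K ρ₀ s : ℝ} (hγ : 0 ≤ γ) (hK : 1 < K)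
    (hρ₀ : 0 < ρ₀) (hs : 0 ≤ s) (hγs : γ ≤ K ^ (-s)) (hf : ∀ ρ, f ρ ≤ 1)
    (hstep : ∀ ρ, 0 < ρ → ρ ≤ ρ₀ → f ρ ≤ ENNReal.ofReal γ * f (K * ρ)) {ρ : ℝ} (hρ : 0 < ρ) :
    f ρ ≤ ENNReal.ofReal ((K / ρ₀ * ρ) ^ s) := by
  have hK0 : 0 < K := by linarith
  have iter : ∀ k : ℕ, ∀ ρ, 0 < ρ → K ^ k * ρ ≤ ρ₀ → f ρ ≤ ENNReal.ofReal (γ ^ k) := by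
    intro k
    induction k with
    | zero => simpa using fun ρ _ _ => hf ρ
    | succ k ih =>
      intro ρ hρ hk
      have hρρ₀ : ρ ≤ ρ₀ := (le_mul_of_one_le_left hρ.le (one_le_pow₀ hK.le)).trans hk
      calc f ρ ≤ ENNReal.ofReal γ * f (K * ρ) := hstep ρ hρ hρρ₀
        _ ≤ ENNReal.ofReal γ * ENNReal.ofReal (γ ^ k) := by
            gcongr
            exact ih _ (by positivity) (by rwa [← mul_assoc, ← pow_succ])
        _ = ENNReal.ofReal (γ ^ (k + 1)) := by rw [← ENNReal.ofReal_mul hγ, pow_succ']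
  rcases le_or_gt ρ₀ ρ with hρρ₀ | hρρ₀
  · refine (hf ρ).trans (ENNReal.one_le_ofReal.2 (Real.one_le_rpow ?_ hs))
    rw [div_mul_eq_mul_div, le_div_iff₀ hρ₀, one_mul]
    nlinarith
  · obtain ⟨k, hk, hk1⟩ := exists_nat_pow_near ((one_le_div hρ).2 hρρ₀.le) hK
    have hk1' : ρ₀ < K ^ k * (K * ρ) := by rwa [div_lt_iff₀ hρ, pow_succ, mul_assoc] at hk1
    refine (iter k ρ hρ ((le_div_iff₀ hρ).1 hk)).trans (ENNReal.ofReal_le_ofReal ?_)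
    calc γ ^ k ≤ (K ^ (-s)) ^ k := pow_le_pow_left₀ hγ hγs k
      _ = ((K ^ k)⁻¹) ^ s := by
          rw [Real.inv_rpow (by positivity), ← Real.rpow_neg (by positivity),
            ← Real.rpow_natCast_mul hK0.le, ← Real.rpow_mul_natCast hK0.le, mul_comm]
      _ ≤ (K / ρ₀ * ρ) ^ s := by
          refine Real.rpow_le_rpow (by positivity) ?_ hs
          rw [inv_le_iff_one_le_mul₀' (by positivity), div_mul_eq_mul_div, mul_div_assoc',
            le_div_iff₀ hρ₀, one_mul]
          linarith

lemma exists_forall_le_and_lt_of_forall_lt {ι : Type*} [Finite ι] {f : ι → ℝ} {b : ℝ}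
    (h : ∀ a, f a < b) : ∃ η, (∀ a, f a ≤ η) ∧ η < b :=
  ((eventually_all.2 fun a => mem_of_superset (Ico_mem_nhdsLT (h a)) fun _ h => h.1).and
    self_mem_nhdsWithin).exists

section Words

variable {ι : Type*} {r c p : ι → ℝ}

/-- `wordMap r c (a₁ :: … :: aₙ :: [])` is `S_{a₁} ∘ ⋯ ∘ S_{aₙ}`, where `S_a x = r a * x + c a`. -/
def wordMap (r c : ι → ℝ) : List ι → ℝ → ℝ
  | [] => id
  | a :: w => (fun x => r a * x + c a) ∘ wordMap r c w

def wordRatio (r : ι → ℝ) (w : List ι) : ℝ := (w.map fun a => |r a|).prod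

def wordWeight (p : ι → ℝ) (w : List ι) : ℝ := (w.map p).prod

@[simp] lemma wordRatio_nil : wordRatio r [] = 1 := rfl

@[simp] lemma wordRatio_cons (a : ι) (w : List ι) :
    wordRatio r (a :: w) = |r a| * wordRatio r w := List.prod_cons

@[simp] lemma wordWeight_nil : wordWeight p [] = 1 := rfl

@[simp] lemma wordWeight_cons (a : ι) (w : List ι) :
    wordWeight p (a :: w) = p a * wordWeight p w := List.prod_cons

lemma wordRatio_nonneg (w : List ι) : 0 ≤ wordRatio r w :=
  List.prod_nonneg fun _ hx => by
    obtain ⟨a, -, rfl⟩ := List.mem_map.1 hx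
    exact abs_nonneg _

lemma wordRatio_pos (hr : ∀ a, r a ≠ 0) (w : List ι) : 0 < wordRatio r w :=
  List.prod_pos fun _ hx => by
    obtain ⟨a, -, rfl⟩ := List.mem_map.1 hx
    exact abs_pos.2 (hr a)

lemma dist_wordMap (w : List ι) (x y : ℝ) :
    dist (wordMap r c w x) (wordMap r c w y) = wordRatio r w * dist x y := by
  induction w with
  | nil => simp [wordMap]
  | cons a w ih =>
    simp only [wordMap, Function.comp_apply, wordRatio_cons, Real.dist_eq] at ih ⊢
    rw [show r a * wordMap r c w x + c a - (r a * wordMap r c w y + c a)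
      = r a * (wordMap r c w x - wordMap r c w y) by ring, abs_mul, ih, mul_assoc]

lemma wordMap_surjective (hr : ∀ a, r a ≠ 0) (w : List ι) : (wordMap r c w).Surjective := by
  induction w with
  | nil => exact Function.surjective_id
  | cons a w ih =>
    refine Function.Surjective.comp (fun y => ⟨(y - c a) / r a, ?_⟩) ih
    field_simp [hr a]
    ring

lemma preimage_wordMap_ball (hr : ∀ a, r a ≠ 0) {w : List ι} {x z : ℝ}
    (hz : wordMap r c w z = x) (ρ : ℝ) :
    wordMap r c w ⁻¹' ball x ρ = ball z (ρ / wordRatio r w) := by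
  ext y
  rw [mem_preimage, mem_ball, mem_ball, ← hz, dist_wordMap, lt_div_iff₀' (wordRatio_pos hr w)]

lemma rpow_wordRatio_le_wordWeight {s : ℝ} (hs : ∀ a, |r a| ^ s ≤ p a) (w : List ι) :
    wordRatio r w ^ s ≤ wordWeight p w := by
  induction w with
  | nil => simp
  | cons a w ih =>
    rw [wordRatio_cons, wordWeight_cons, Real.mul_rpow (abs_nonneg _) (wordRatio_nonneg w)]
    exact mul_le_mul (hs a) ih (Real.rpow_nonneg (wordRatio_nonneg w) s)
      ((Real.rpow_nonneg (abs_nonneg _) s).trans (hs a))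

lemma pairwiseDisjoint_map_cons (S : Set ι) (F : ι → Finset (List ι)) :
    S.PairwiseDisjoint fun a => (F a).map ⟨List.cons a, List.cons_injective⟩ := by
  intro a _ b _ hab
  refine Finset.disjoint_left.2 fun w ha hb => hab ?_
  obtain ⟨u, -, rfl⟩ := Finset.mem_map.1 ha
  obtain ⟨v, -, h⟩ := Finset.mem_map.1 hb
  exact (List.cons.inj h).1.symm

end Words

section CutSet

variable {ι : Type*} [Fintype ι] {r : ι → ℝ}

/-- The stopping-time cut set of scale `t`: words are extended letter by letter until their
ratio is `≤ t`. The fuel `n` bounds the length; it suffices once `η ^ n ≤ t` for some `η`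
bounding every `|r a|` (see `wordRatio_le_of_mem_cutSet`). -/
noncomputable def cutSet (r : ι → ℝ) : ℕ → ℝ → Finset (List ι)
  | 0, _ => {[]}
  | n + 1, t => Finset.univ.disjiUnion
      (fun a => (if |r a| ≤ t then {[]} else cutSet r n (t / |r a|)).map
        ⟨List.cons a, List.cons_injective⟩)
      (pairwiseDisjoint_map_cons _ _)

lemma mem_cutSet_succ {n : ℕ} {t : ℝ} {w : List ι} :
    w ∈ cutSet r (n + 1) t ↔
      ∃ a, (|r a| ≤ t ∧ w = [a]) ∨ (t < |r a| ∧ ∃ u ∈ cutSet r n (t / |r a|), w = a :: u) := by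
  rw [cutSet, Finset.mem_disjiUnion]
  simp only [Finset.mem_univ, true_and, Finset.mem_map, Function.Embedding.coeFn_mk]
  refine exists_congr fun a => ?_
  split_ifs with h
  · simp [h, eq_comm]
  · simp [not_le.1 h, eq_comm]

lemma wordRatio_le_of_mem_cutSet {η : ℝ} (hr : ∀ a, r a ≠ 0) (hη : ∀ a, |r a| ≤ η) :
    ∀ {n : ℕ} {t : ℝ} {w : List ι}, w ∈ cutSet r n t → η ^ n ≤ t → wordRatio r w ≤ t
  | 0, t, w, hw, ht => by simp_all [cutSet]
  | n + 1, t, w, hw, ht => by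
    obtain ⟨a, ⟨ha, rfl⟩ | ⟨ha, u, hu, rfl⟩⟩ := mem_cutSet_succ.1 hw
    · simpa using ha
    · have hra : 0 < |r a| := abs_pos.2 (hr a)
      have hηn : η ^ n ≤ t / |r a| := by
        rw [le_div_iff₀ hra]
        calc η ^ n * |r a| ≤ η ^ n * η := by
              gcongr
              · exact pow_nonneg ((abs_nonneg _).trans (hη a)) n
              · exact hη a
          _ = η ^ (n + 1) := (pow_succ η n).symm
          _ ≤ t := ht
      calc wordRatio r (a :: u) = |r a| * wordRatio r u := wordRatio_cons a u
        _ ≤ |r a| * (t / |r a|) := by gcongr; exact wordRatio_le_of_mem_cutSet hr hη hu hηn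
        _ = t := mul_div_cancel₀ t hra.ne'

lemma mul_le_wordRatio_of_mem_cutSet {θ : ℝ} (hr : ∀ a, r a ≠ 0) (hθ0 : 0 ≤ θ) (hθ1 : θ ≤ 1)
    (hθ : ∀ a, θ ≤ |r a|) :
    ∀ {n : ℕ} {t : ℝ} {w : List ι}, w ∈ cutSet r n t → t ≤ 1 → θ * t ≤ wordRatio r w
  | 0, t, w, hw, ht => by
    simp only [cutSet, Finset.mem_singleton] at hw
    subst hw
    simpa using (mul_le_of_le_one_right hθ0 ht).trans hθ1
  | n + 1, t, w, hw, ht => by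
    obtain ⟨a, ⟨ha, rfl⟩ | ⟨ha, u, hu, rfl⟩⟩ := mem_cutSet_succ.1 hw
    · simpa using (mul_le_of_le_one_right hθ0 ht).trans (hθ a)
    · have hra : 0 < |r a| := abs_pos.2 (hr a)
      have ih := mul_le_wordRatio_of_mem_cutSet hr hθ0 hθ1 hθ hu ((div_le_one hra).2 ha.le)
      rw [wordRatio_cons]
      calc θ * t = |r a| * (θ * (t / |r a|)) := by field_simp
        _ ≤ |r a| * wordRatio r u := by gcongr

lemma exists_cutSet_wordRatio_bounds (hr : ∀ a, 0 < |r a| ∧ |r a| < 1) :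
    ∃ θ > 0, ∀ t, 0 < t → t ≤ 1 →
      ∃ n, ∀ w ∈ cutSet r n t, θ * t ≤ wordRatio r w ∧ wordRatio r w ≤ t := by
  have hr0 : ∀ a, r a ≠ 0 := fun a => abs_pos.1 (hr a).1
  obtain ⟨θ, ⟨hθ, hθ1⟩, hθ0⟩ : ∃ θ, ((∀ a, θ ≤ |r a|) ∧ θ ≤ 1) ∧ 0 < θ :=
    (((eventually_all.2 fun a => mem_of_superset (Ioc_mem_nhdsGT (hr a).1) fun _ h => h.2).and
      (mem_of_superset (Ioc_mem_nhdsGT one_pos) fun _ h => h.2)).and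
      self_mem_nhdsWithin).exists
  obtain ⟨η, hη, hη1⟩ := exists_forall_le_and_lt_of_forall_lt fun a => (hr a).2
  refine ⟨θ, hθ0, fun t ht0 ht1 => ?_⟩
  obtain ⟨n, hn⟩ := exists_pow_lt_of_lt_one ht0 hη1
  exact ⟨n, fun w hw => ⟨mul_le_wordRatio_of_mem_cutSet hr0 hθ0.le hθ1 hθ hw ht1,
    wordRatio_le_of_mem_cutSet hr0 hη hw hn.le⟩⟩

end CutSet

section Support

variable {ι : Type*} {r c : ι → ℝ} {μ : Measure ℝ} [IsProbabilityMeasure μ] {D : ℝ}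

lemma measure_preimage_wordMap_ball_eq_one
    (hD : ∀ k ∈ msupport μ, ∀ z ∈ msupport μ, dist k z ≤ D) {w : List ι} {x ρ : ℝ}
    (h : μ (wordMap r c w ⁻¹' ball x ρ) ≠ 0) :
    μ (wordMap r c w ⁻¹' ball x (ρ + wordRatio r w * D)) = 1 := by
  obtain ⟨z, hz, hzμ⟩ := exists_mem_msupport_of_measure_ne_zero h
  refine measure_eq_one_of_msupport_subset fun k hk => ?_
  calc dist (wordMap r c w k) x
      ≤ dist (wordMap r c w k) (wordMap r c w z) + dist (wordMap r c w z) x := dist_triangle _ _ _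
    _ < wordRatio r w * D + ρ := by
        rw [dist_wordMap]
        exact add_lt_add_of_le_of_lt
          (mul_le_mul_of_nonneg_left (hD k hk z hzμ) (wordRatio_nonneg w)) hz
    _ = ρ + wordRatio r w * D := add_comm _ _

lemma measure_preimage_wordMap_ball_le (hr : ∀ a, r a ≠ 0) {δ γ : ℝ}
    (hsmall : ∀ x ρ, ρ ≤ δ → μ (ball x ρ) ≤ ENNReal.ofReal γ)
    (hD : ∀ k ∈ msupport μ, ∀ z ∈ msupport μ, dist k z ≤ D) {w : List ι} {x ρ : ℝ}
    (hρ : ρ ≤ δ * wordRatio r w) :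
    μ (wordMap r c w ⁻¹' ball x ρ) ≤
      ENNReal.ofReal γ * μ (wordMap r c w ⁻¹' ball x (ρ + wordRatio r w * D)) := by
  rcases eq_or_ne (μ (wordMap r c w ⁻¹' ball x ρ)) 0 with h | h
  · simp [h]
  rw [measure_preimage_wordMap_ball_eq_one hD h, mul_one]
  obtain ⟨z, hz⟩ := wordMap_surjective (c := c) hr w x
  rw [preimage_wordMap_ball hr hz]
  exact hsmall z _ ((div_le_iff₀ (wordRatio_pos hr w)).2 hρ)

end Support

lemma measure_lt_abs_eq_zero_of_le_succ {μ : Measure ℝ} [IsFiniteMeasure μ] {R₀ : ℝ}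
    (h : ∀ R ≥ R₀, μ {x | R < |x|} ≤ μ {x | R + 1 < |x|}) : μ {x | R₀ < |x|} = 0 := by
  set s : ℕ → Set ℝ := fun n => {x | R₀ + n < |x|}
  have hs : ∀ n, μ {x | R₀ < |x|} ≤ μ (s n) := by
    intro n
    induction n with
    | zero => simp [s]
    | succ n ih =>
      refine ih.trans ((h _ (le_add_of_nonneg_right n.cast_nonneg)).trans_eq ?_)
      simp only [s, Nat.cast_succ, add_assoc]
  have hlim : Tendsto (μ ∘ s) atTop (𝓝 (μ (⋂ n, s n))) :=
    tendsto_measure_iInter_atTop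
      (fun n => (measurableSet_lt measurable_const measurable_abs).nullMeasurableSet)
      (fun n k hnk x (hx : R₀ + k < |x|) => show R₀ + n < |x| by
        have : (n : ℝ) ≤ k := Nat.cast_le.2 hnk
        linarith) ⟨0, measure_ne_top μ _⟩
  have hempty : ⋂ n, s n = ∅ := by
    refine eq_empty_of_forall_notMem fun x hx => ?_
    obtain ⟨n, hn⟩ := exists_nat_gt (|x| - R₀)
    have hxn : R₀ + n < |x| := mem_iInter.1 hx n
    linarith
  rw [hempty, measure_empty] at hlim
  exact nonpos_iff_eq_zero.1 (ge_of_tendsto' hlim hs)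

section SelfSimilar

variable {ι : Type*} [Fintype ι] {r c p : ι → ℝ} {μ : Measure ℝ}

def IsSelfSimilar (r c p : ι → ℝ) (μ : Measure ℝ) : Prop :=
  μ = ∑ a, ENNReal.ofReal (p a) • Measure.map (fun x : ℝ => r a * x + c a) μ

namespace IsSelfSimilar

lemma measure_eq_sum_preimage (hμ : IsSelfSimilar r c p μ) {A : Set ℝ} (hA : MeasurableSet A) :
    μ A = ∑ a, ENNReal.ofReal (p a) * μ ((fun x : ℝ => r a * x + c a) ⁻¹' A) := by
  conv_lhs => rw [show μ = _ from hμ]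
  simp only [Measure.finsetSum_apply, Measure.smul_apply, smul_eq_mul]
  exact Finset.sum_congr rfl fun a _ => by rw [Measure.map_apply (by fun_prop) hA]

lemma sum_ofReal_eq_one [IsProbabilityMeasure μ] (hμ : IsSelfSimilar r c p μ) :
    ∑ a, ENNReal.ofReal (p a) = 1 := by
  simpa using (hμ.measure_eq_sum_preimage MeasurableSet.univ).symm

lemma isBounded_msupport [IsProbabilityMeasure μ] (hμ : IsSelfSimilar r c p μ)
    (hr : ∀ a, |r a| < 1) : Bornology.IsBounded (msupport μ) := by
  obtain ⟨η, hη, hη1⟩ := exists_forall_le_and_lt_of_forall_lt hr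
  obtain ⟨M, hM⟩ := Finite.exists_le fun a => |c a|
  set R₀ := (|M| + 1) / (1 - η)
  have hR₀ : R₀ * (1 - η) = |M| + 1 := div_mul_cancel₀ _ (by linarith)
  have hsub : ∀ R ≥ R₀, ∀ a,
      (fun x => r a * x + c a) ⁻¹' {x | R < |x|} ⊆ {x | R + 1 < |x|} := by
    intro R hR a x hx
    by_contra hxR
    simp only [mem_preimage, mem_ofPred_eq, not_lt] at hx hxR
    have hR1 : 0 ≤ R + 1 := by
      have : 0 ≤ R₀ := div_nonneg (by positivity) (by linarith)
      linarith
    have h1 : |r a * x + c a| ≤ η * (R + 1) + M :=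
      calc |r a * x + c a| ≤ |r a| * |x| + |c a| := by rw [← abs_mul]; exact abs_add_le _ _
        _ ≤ |r a| * (R + 1) + M := by gcongr; exact hM a
        _ ≤ η * (R + 1) + M := by gcongr; exact hη a
    nlinarith [mul_le_mul_of_nonneg_right hR (by linarith : (0 : ℝ) ≤ 1 - η), le_abs_self M]
  have hnull : μ {x | R₀ < |x|} = 0 := by
    refine measure_lt_abs_eq_zero_of_le_succ fun R hR => ?_
    rw [hμ.measure_eq_sum_preimage (measurableSet_lt measurable_const measurable_abs)]
    calc ∑ a, ENNReal.ofReal (p a) * μ ((fun x => r a * x + c a) ⁻¹' {x | R < |x|})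
        ≤ ∑ a, ENNReal.ofReal (p a) * μ {x | R + 1 < |x|} := by
          gcongr with a; exact hsub R hR a
      _ = μ {x | R + 1 < |x|} := by rw [← Finset.sum_mul, hμ.sum_ofReal_eq_one, one_mul]
  refine (isBounded_closedBall (x := 0) (r := R₀)).subset fun x hx => ?_
  rw [msupport_eq_support] at hx
  have := Measure.subset_compl_support_of_isOpen (isOpen_lt continuous_const continuous_abs) hnull
  simpa using this.mt (not_not.2 hx)

lemma exists_one_le_dist_le_of_mem_msupport [IsProbabilityMeasure μ] (hμ : IsSelfSimilar r c p μ)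
    (hr : ∀ a, |r a| < 1) : ∃ D, 1 ≤ D ∧ ∀ k ∈ msupport μ, ∀ z ∈ msupport μ, dist k z ≤ D :=
  ((eventually_ge_atTop 1).and (isBounded_iff_eventually.1 (hμ.isBounded_msupport hr))).exists

lemma measure_eq_sum_cutSet (hμ : IsSelfSimilar r c p μ) (hp : ∀ a, 0 ≤ p a) :
    ∀ (n : ℕ) (t : ℝ) {A : Set ℝ}, MeasurableSet A →
      μ A = ∑ w ∈ cutSet r n t, ENNReal.ofReal (wordWeight p w) * μ (wordMap r c w ⁻¹' A)
  | 0, t, A, hA => by simp [cutSet, wordMap]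
  | n + 1, t, A, hA => by
    rw [cutSet, Finset.sum_disjiUnion, hμ.measure_eq_sum_preimage hA]
    refine Finset.sum_congr rfl fun a _ => ?_
    have hA' : MeasurableSet ((fun x => r a * x + c a) ⁻¹' A) := (by fun_prop : Measurable _) hA
    have htail : μ ((fun x => r a * x + c a) ⁻¹' A) =
        ∑ u ∈ if |r a| ≤ t then {[]} else cutSet r n (t / |r a|),
          ENNReal.ofReal (wordWeight p u) *
            μ (wordMap r c u ⁻¹' ((fun x => r a * x + c a) ⁻¹' A)) := by
      split_ifs
      · simp [wordMap]
      · exact hμ.measure_eq_sum_cutSet hp n _ hA'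
    rw [Finset.sum_map, htail, Finset.mul_sum]
    refine Finset.sum_congr rfl fun u _ => ?_
    rw [Function.Embedding.coeFn_mk, wordWeight_cons, ENNReal.ofReal_mul (hp a), mul_assoc]
    rfl

lemma ofReal_wordWeight_mul_le_measure (hμ : IsSelfSimilar r c p μ) (hp : ∀ a, 0 ≤ p a)
    {n : ℕ} {t : ℝ} {w : List ι} (hw : w ∈ cutSet r n t) {A : Set ℝ} (hA : MeasurableSet A) :
    ENNReal.ofReal (wordWeight p w) * μ (wordMap r c w ⁻¹' A) ≤ μ A := by
  rw [hμ.measure_eq_sum_cutSet hp n t hA]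
  exact Finset.single_le_sum
    (f := fun w => ENNReal.ofReal (wordWeight p w) * μ (wordMap r c w ⁻¹' A))
    (fun _ _ => zero_le) hw

lemma exists_mem_cutSet_measure_preimage_ne_zero (hμ : IsSelfSimilar r c p μ)
    (hp : ∀ a, 0 ≤ p a) (n : ℕ) (t : ℝ) {A : Set ℝ} (hA : MeasurableSet A) (h : μ A ≠ 0) :
    ∃ w ∈ cutSet r n t, μ (wordMap r c w ⁻¹' A) ≠ 0 := by
  rw [hμ.measure_eq_sum_cutSet hp n t hA] at h
  obtain ⟨w, hw, hw0⟩ := Finset.exists_ne_zero_of_sum_ne_zero h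
  exact ⟨w, hw, right_ne_zero_of_mul hw0⟩

lemma exists_measure_ball_le_mul_measure_ball [IsProbabilityMeasure μ] [NullSingletonClass μ]
    (hμ : IsSelfSimilar r c p μ) (hr : ∀ a, 0 < |r a| ∧ |r a| < 1) (hp : ∀ a, 0 ≤ p a) :
    ∃ γ : ℝ, 0 < γ ∧ γ < 1 ∧ ∃ K > 1, ∃ ρ₀ > 0, ∀ x ρ, 0 < ρ → ρ ≤ ρ₀ →
      μ (ball x ρ) ≤ ENNReal.ofReal γ * μ (ball x (K * ρ)) := by
  have hr0 : ∀ a, r a ≠ 0 := fun a => abs_pos.1 (hr a).1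
  obtain ⟨θ, hθ, hcut⟩ := exists_cutSet_wordRatio_bounds hr
  obtain ⟨δ, hδ, γ, hγ0, hγ1, hsmall⟩ := exists_measure_ball_le_lt_one (μ := μ)
  obtain ⟨D, hD1, hD⟩ := hμ.exists_one_le_dist_le_of_mem_msupport fun a => (hr a).2
  refine ⟨γ, hγ0, hγ1, 1 + D / (δ * θ), by simp only [lt_add_iff_pos_right]; positivity,
    δ * θ, by positivity, fun x ρ hρ hρ₀ => ?_⟩
  -- decompose at the scale `t` where the pieces `S_w⁻¹ (ball x ρ)` are balls of radius `≤ δ`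
  set t := ρ / (δ * θ)
  have hρt : ρ = δ * (θ * t) := by simp only [t]; field_simp
  obtain ⟨n, hn⟩ := hcut t (by positivity) ((div_le_one (by positivity)).2 hρ₀)
  rw [hμ.measure_eq_sum_cutSet hp n t measurableSet_ball,
    hμ.measure_eq_sum_cutSet hp n t measurableSet_ball, Finset.mul_sum]
  refine Finset.sum_le_sum fun w hw => ?_
  obtain ⟨hθw, hwt⟩ := hn w hw
  have hρw : ρ ≤ δ * wordRatio r w := by rw [hρt]; gcongr
  have hKρ : ρ + wordRatio r w * D ≤ (1 + D / (δ * θ)) * ρ := by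
    have : wordRatio r w * D ≤ t * D := by gcongr
    calc ρ + wordRatio r w * D ≤ ρ + t * D := by linarith
      _ = (1 + D / (δ * θ)) * ρ := by simp only [t]; ring
  calc ENNReal.ofReal (wordWeight p w) * μ (wordMap r c w ⁻¹' ball x ρ)
      ≤ ENNReal.ofReal (wordWeight p w) *
          (ENNReal.ofReal γ * μ (wordMap r c w ⁻¹' ball x (ρ + wordRatio r w * D))) := by
        gcongr
        exact measure_preimage_wordMap_ball_le hr0 hsmall hD hρw
    _ ≤ ENNReal.ofReal (wordWeight p w) *
          (ENNReal.ofReal γ * μ (wordMap r c w ⁻¹' ball x ((1 + D / (δ * θ)) * ρ))) := by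
        gcongr
    _ = _ := mul_left_comm _ _ _

lemma exists_measure_ball_le_rpow [IsProbabilityMeasure μ] [NullSingletonClass μ]
    (hμ : IsSelfSimilar r c p μ) (hr : ∀ a, 0 < |r a| ∧ |r a| < 1) (hp : ∀ a, 0 ≤ p a) :
    ∃ s : ℝ, 0 < s ∧ ∃ C : ℝ, ∀ y ρ, 0 < ρ → μ (ball y ρ) ≤ ENNReal.ofReal (C * ρ ^ s) := by
  obtain ⟨γ, hγ0, hγ1, K, hK, ρ₀, hρ₀, hstep⟩ :=
    hμ.exists_measure_ball_le_mul_measure_ball hr hp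
  have hs : 0 < -Real.logb K γ := neg_pos.2 (Real.logb_neg hK hγ0 hγ1)
  refine ⟨_, hs, (K / ρ₀) ^ (-Real.logb K γ), fun y ρ hρ => ?_⟩
  rw [← Real.mul_rpow (by positivity) hρ.le]
  refine le_ofReal_rpow_of_le_mul_comp_mul hγ0.le hK hρ₀ hs.le ?_ (fun _ => prob_le_one)
    (hstep y) hρ
  rw [neg_neg, Real.rpow_logb (by linarith) hK.ne' hγ0]

lemma exists_rpow_le_measure_ball [IsProbabilityMeasure μ] (hμ : IsSelfSimilar r c p μ)
    (hr : ∀ a, 0 < |r a| ∧ |r a| < 1) (hp : ∀ a, 0 < p a) :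
    ∃ s C : ℝ, 0 < C ∧ ∀ x ∈ msupport μ, ∀ ρ, 0 < ρ → ρ ≤ 1 →
      ENNReal.ofReal (C * ρ ^ s) ≤ μ (ball x ρ) := by
  have hp0 : ∀ a, 0 ≤ p a := fun a => (hp a).le
  obtain ⟨θ, hθ, hcut⟩ := exists_cutSet_wordRatio_bounds hr
  obtain ⟨D, hD1, hD⟩ := hμ.exists_one_le_dist_le_of_mem_msupport fun a => (hr a).2
  obtain ⟨s, hs0, hs⟩ : ∃ s, 0 ≤ s ∧ ∀ a, |r a| ^ s ≤ p a :=
    ((eventually_ge_atTop 0).and (eventually_all.2 fun a =>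
      ((tendsto_rpow_atTop_of_base_lt_one _ (by linarith [abs_nonneg (r a)]) (hr a).2).eventually
        (eventually_le_nhds (hp a))))).exists
  refine ⟨s, (θ / (2 * D)) ^ s, by positivity, fun x hx ρ hρ hρ1 => ?_⟩
  -- some piece `S_w (supp μ)`, of diameter `≤ ρ / 2`, meets `ball x (ρ / 2)`, so lies in `ball x ρ`
  set t := ρ / (2 * D)
  obtain ⟨n, hn⟩ := hcut t (by positivity) ((div_le_one (by positivity)).2 (by linarith))
  obtain ⟨w, hw, hw0⟩ := hμ.exists_mem_cutSet_measure_preimage_ne_zero hp0 n t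
    measurableSet_ball (hx (ρ / 2) (by positivity)).ne'
  obtain ⟨hθw, hwt⟩ := hn w hw
  have hρw : ρ / 2 + wordRatio r w * D ≤ ρ := by
    have : wordRatio r w * D ≤ t * D := by gcongr
    have htD : t * D = ρ / 2 := by simp only [t]; field_simp
    linarith
  calc ENNReal.ofReal ((θ / (2 * D)) ^ s * ρ ^ s)
      = ENNReal.ofReal ((θ * t) ^ s) := by
        rw [← Real.mul_rpow (by positivity) hρ.le, mul_comm_div]
    _ ≤ ENNReal.ofReal (wordRatio r w ^ s) :=
        ENNReal.ofReal_le_ofReal (Real.rpow_le_rpow (by positivity) hθw hs0)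
    _ ≤ ENNReal.ofReal (wordWeight p w) :=
        ENNReal.ofReal_le_ofReal (rpow_wordRatio_le_wordWeight hs w)
    _ = ENNReal.ofReal (wordWeight p w) *
          μ (wordMap r c w ⁻¹' ball x (ρ / 2 + wordRatio r w * D)) := by
        rw [measure_preimage_wordMap_ball_eq_one hD hw0, mul_one]
    _ ≤ ENNReal.ofReal (wordWeight p w) * μ (wordMap r c w ⁻¹' ball x ρ) := by
        gcongr
    _ ≤ μ (ball x ρ) := hμ.ofReal_wordWeight_mul_le_measure hp0 hw measurableSet_ball

end IsSelfSimilar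

end SelfSimilar

theorem stmt17_general (m : ℕ) (r c p : Fin m → ℝ)
    (hr : ∀ a, 0 < |r a| ∧ |r a| < 1) (hp : ∀ a, 0 < p a)
    (μ : Measure ℝ) (hprob : IsProbabilityMeasure μ) (hna : ∀ x : ℝ, μ {x} = 0)
    (hinv : μ = ∑ a, ENNReal.ofReal (p a) • Measure.map (fun x : ℝ => r a * x + c a) μ) :
    ∃ (sF sM C : ℝ), 0 < sF ∧ sF ≤ sM ∧ 1 ≤ C ∧
      (∀ x ∈ msupport μ, ∀ ρ : ℝ, 0 < ρ → ρ ≤ 1 →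
        ENNReal.ofReal (C⁻¹ * ρ ^ sM) ≤ μ (Set.Ioo (x - ρ) (x + ρ))) ∧
      (∀ y : ℝ, ∀ ρ : ℝ, 0 < ρ → ρ ≤ 1 →
        μ (Set.Ioo (y - ρ) (y + ρ)) ≤ ENNReal.ofReal (C * ρ ^ sF)) := by
  have : NullSingletonClass μ := ⟨hna⟩
  have hμ : IsSelfSimilar r c p μ := hinv
  obtain ⟨sF, hsF, C₁, hupper⟩ := hμ.exists_measure_ball_le_rpow hr fun a => (hp a).le
  obtain ⟨s, C₂, hC₂, hlower⟩ := hμ.exists_rpow_le_measure_ball hr hp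
  have hC₁ : C₁ ≤ max 1 (max C₁ C₂⁻¹) := (le_max_left _ _).trans (le_max_right _ _)
  have hC₂' : C₂⁻¹ ≤ max 1 (max C₁ C₂⁻¹) := (le_max_right _ _).trans (le_max_right _ _)
  refine ⟨sF, max sF s, max 1 (max C₁ C₂⁻¹), hsF, le_max_left _ _, le_max_left _ _,
    fun x hx ρ hρ hρ1 => ?_, fun y ρ hρ _ => ?_⟩
  · rw [← Real.ball_eq_Ioo]
    refine le_trans (ENNReal.ofReal_le_ofReal ?_) (hlower x hx ρ hρ hρ1)
    exact mul_le_mul (inv_le_of_inv_le₀ hC₂ hC₂')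
      (Real.rpow_le_rpow_of_exponent_ge hρ hρ1 (le_max_right _ _)) (by positivity) hC₂.le
  · rw [← Real.ball_eq_Ioo]
    refine (hupper y ρ hρ).trans (ENNReal.ofReal_le_ofReal ?_)
    gcongr

/-- Frostman-type bounds for a self-similar measure: there are `0 < s_F ≤ s_M < ∞` and
`C ≥ 1` with `μ(x−r, x+r) ≥ C⁻¹ r^{s_M}` for `x` in the support and
`μ(y−r, y+r) ≤ C r^{s_F}` for all `y`, whenever `0 < r ≤ 1`. -/
theorem stmt17 (m : ℕ) (hm : 0 < m) (r c p : Fin m → ℝ)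
    (hr : ∀ a, 0 < |r a| ∧ |r a| < 1) (hp : ∀ a, 0 < p a) (hpsum : ∑ a, p a = 1)
    (μ : Measure ℝ) (hprob : IsProbabilityMeasure μ) (hna : ∀ x : ℝ, μ {x} = 0)
    (hinv : μ = ∑ a, ENNReal.ofReal (p a) • Measure.map (fun x : ℝ => r a * x + c a) μ) :
    ∃ (sF sM C : ℝ), 0 < sF ∧ sF ≤ sM ∧ 1 ≤ C ∧
      (∀ x ∈ msupport μ, ∀ ρ : ℝ, 0 < ρ → ρ ≤ 1 →
        ENNReal.ofReal (C⁻¹ * ρ ^ sM) ≤ μ (Set.Ioo (x - ρ) (x + ρ))) ∧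
      (∀ y : ℝ, ∀ ρ : ℝ, 0 < ρ → ρ ≤ 1 →
        μ (Set.Ioo (y - ρ) (y + ρ)) ≤ ENNReal.ofReal (C * ρ ^ sF)) :=
  stmt17_general m r c p hr hp μ hprob hna hinv
end

section
/- Define h(x) = exp(−exp(x^{−2})) for x ≠ 0 and h(0) = 0, and f(x) = x + h(x). Let 0 < c < 1 and d ≥ 0, and let λ(x) = c x + d. Let g : [0, f(1)] → [0,1] be the inverse of the restriction of f to [0,1] (f is strictly increasing on [0,1]). Then the set {y ∈ [0, f(1)] : (f ∘ λ ∘ g)''(y) = 0} is finite. -/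
/-!
With `u = g y` and `g' = 1 / f'(g)`, the chain rule gives `(f ∘ λ ∘ g)''(y) = c N(u) / f'(u)³`,
where `N(u) = c h''(cu + d) f'(u) - f'(cu + d) h''(u)` (`numer19` below).
`N` is real analytic on `(0, ∞)`, so its zeros in `(0, 1)` could only accumulate at `0`.
They do not, because `N ≠ 0` near `0⁺`. For `d > 0`: either `h''(d) > 0` and `N → c h''(d)`,
or `h''(d) ≤ 0`, and then `h''(cu + d) < 0 < h''(u)`, because
`h''(x) = h'(x) (2e^{x⁻²} - 2 - 3x²) / x³` with a strictly decreasing middle factor.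
For `d = 0`: `h''(cu) / h''(u) → 0` because `c < 1`, so `N(u)` has the sign of `-h''(u) < 0`.
-/

open Filter Set Real Topology

noncomputable def h19 (x : ℝ) : ℝ :=
  if x = 0 then 0 else Real.exp (-Real.exp (1 / x ^ 2))

noncomputable def f19 (x : ℝ) : ℝ := x + h19 x

noncomputable def expInvSq (x : ℝ) : ℝ := exp (1 / x ^ 2)

noncomputable def h19Deriv (x : ℝ) : ℝ := 2 * expInvSq x * exp (-expInvSq x) / x ^ 3

noncomputable def h19Deriv2Factor (x : ℝ) : ℝ := 2 * expInvSq x - 2 - 3 * x ^ 2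

noncomputable def h19Deriv2 (x : ℝ) : ℝ := h19Deriv x * h19Deriv2Factor x / x ^ 3

lemma expInvSq_pos (x : ℝ) : 0 < expInvSq x := exp_pos _

lemma h19_of_ne_zero {x : ℝ} (hx : x ≠ 0) : h19 x = exp (-expInvSq x) := if_neg hx

lemma hasDerivAt_expInvSq {x : ℝ} (hx : x ≠ 0) :
    HasDerivAt expInvSq (-2 * expInvSq x / x ^ 3) x := by
  have h := ((hasDerivAt_const x (1 : ℝ)).div (hasDerivAt_pow 2 x) (pow_ne_zero 2 hx)).exp
  refine h.congr_deriv ?_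
  simp only [expInvSq, Pi.div_apply]
  field_simp
  ring

lemma hasDerivAt_h19 {x : ℝ} (hx : x ≠ 0) : HasDerivAt h19 (h19Deriv x) x := by
  have h := (hasDerivAt_expInvSq hx).neg.exp
  have heq : (fun y => exp (-expInvSq y)) =ᶠ[𝓝 x] h19 := by
    filter_upwards [isOpen_ne.mem_nhds hx] with y hy using (h19_of_ne_zero hy).symm
  refine (h.congr_of_eventuallyEq heq.symm).congr_deriv ?_
  simp only [h19Deriv, Pi.neg_apply]
  field_simp

lemma hasDerivAt_f19 {x : ℝ} (hx : x ≠ 0) : HasDerivAt f19 (1 + h19Deriv x) x :=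
  (hasDerivAt_id x).add (hasDerivAt_h19 hx)

lemma hasDerivAt_h19Deriv {x : ℝ} (hx : x ≠ 0) : HasDerivAt h19Deriv (h19Deriv2 x) x := by
  have hE := hasDerivAt_expInvSq hx
  have h := (((hE.const_mul 2).mul hE.neg.exp).div (hasDerivAt_pow 3 x) (pow_ne_zero 3 hx))
  refine h.congr_deriv ?_
  simp only [h19Deriv2, h19Deriv, h19Deriv2Factor, Pi.neg_apply, Pi.mul_apply]
  field_simp
  ring

lemma analyticAt_expInvSq {x : ℝ} (hx : x ≠ 0) : AnalyticAt ℝ expInvSq x :=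
  analyticAt_rexp.comp (analyticAt_const.div (analyticAt_id.pow 2) (pow_ne_zero 2 hx))

lemma analyticAt_h19Deriv {x : ℝ} (hx : x ≠ 0) : AnalyticAt ℝ h19Deriv x := by
  have hE := analyticAt_expInvSq hx
  exact ((analyticAt_const.mul hE).mul (analyticAt_rexp.comp hE.neg)).div
    (analyticAt_id.pow 3) (pow_ne_zero 3 hx)

lemma analyticAt_h19Deriv2 {x : ℝ} (hx : x ≠ 0) : AnalyticAt ℝ h19Deriv2 x := by
  have hE := analyticAt_expInvSq hx
  exact ((analyticAt_h19Deriv hx).mul (((analyticAt_const.mul hE).sub analyticAt_const).sub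
    (analyticAt_const.mul (analyticAt_id.pow 2)))).div (analyticAt_id.pow 3) (pow_ne_zero 3 hx)

lemma antitoneOn_expInvSq : AntitoneOn expInvSq (Ioi 0) := fun _ ha _ _ hab =>
  exp_le_exp.2 (one_div_le_one_div_of_le (pow_pos ha 2) (pow_le_pow_left₀ (le_of_lt ha) hab 2))

lemma h19_nonneg (x : ℝ) : 0 ≤ h19 x := by
  unfold h19
  split_ifs
  exacts [le_rfl, (exp_pos _).le]

lemma monotoneOn_h19 : MonotoneOn h19 (Ici 0) := by
  intro a ha b _ hab
  rcases (mem_Ici.1 ha).eq_or_lt with rfl | ha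
  · simpa [h19] using h19_nonneg b
  · rw [h19_of_ne_zero ha.ne', h19_of_ne_zero (ha.trans_le hab).ne']
    exact exp_le_exp.2 (neg_le_neg (antitoneOn_expInvSq ha (ha.trans_le hab) hab))

lemma strictMonoOn_f19 : StrictMonoOn f19 (Ici 0) := fun _ ha _ hb hab =>
  add_lt_add_of_lt_of_le hab (monotoneOn_h19 ha hb hab.le)

lemma f19_zero : f19 0 = 0 := by simp [f19, h19]

lemma f19_mem_Icc {x : ℝ} (hx : x ∈ Icc (0 : ℝ) 1) : f19 x ∈ Icc 0 (f19 1) := by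
  have hmono := strictMonoOn_f19.monotoneOn
  refine ⟨?_, hmono hx.1 (mem_Ici.2 zero_le_one) hx.2⟩
  simpa [f19_zero] using hmono (mem_Ici.2 le_rfl) hx.1 hx.1

lemma h19Deriv_pos {x : ℝ} (hx : 0 < x) : 0 < h19Deriv x := by
  have := expInvSq_pos x
  unfold h19Deriv
  positivity

lemma one_le_h19Deriv2Factor {x : ℝ} (hx : 0 < x) (hx2 : x ≤ 1 / 2) : 1 ≤ h19Deriv2Factor x := by
  have hsq : 4 ≤ 1 / x ^ 2 := by
    rw [le_div_iff₀ (by positivity)]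
    nlinarith
  have hE : 1 / x ^ 2 + 1 ≤ expInvSq x := add_one_le_exp _
  unfold h19Deriv2Factor
  nlinarith

lemma h19Deriv2_pos {x : ℝ} (hx : 0 < x) (hx2 : x ≤ 1 / 2) : 0 < h19Deriv2 x := by
  have := h19Deriv_pos hx
  have := one_le_h19Deriv2Factor hx hx2
  unfold h19Deriv2
  positivity

lemma strictAntiOn_h19Deriv2Factor : StrictAntiOn h19Deriv2Factor (Ioi 0) := by
  intro a ha b hb hab
  have hE := antitoneOn_expInvSq ha hb hab.le
  have hsq : a ^ 2 < b ^ 2 := pow_lt_pow_left₀ hab (le_of_lt ha) two_ne_zero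
  unfold h19Deriv2Factor
  linarith

lemma tendsto_one_div_sq : Tendsto (fun x : ℝ => 1 / x ^ 2) (𝓝[>] 0) atTop := by
  refine ((tendsto_pow_atTop two_ne_zero).comp tendsto_inv_nhdsGT_zero).congr fun x => ?_
  rw [Function.comp_apply, inv_pow, one_div]

lemma tendsto_expInvSq : Tendsto expInvSq (𝓝[>] 0) atTop :=
  tendsto_exp_atTop.comp tendsto_one_div_sq

lemma inv_le_expInvSq (x : ℝ) : x⁻¹ ≤ expInvSq x :=
  calc x⁻¹ ≤ x⁻¹ ^ 2 + 1 := by nlinarith [sq_nonneg (x⁻¹ - 1)]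
    _ ≤ expInvSq x := by
      rw [expInvSq, one_div, ← inv_pow]
      exact add_one_le_exp _

lemma tendsto_inv_pow_mul_exp_neg_expInvSq (n k : ℕ) :
    Tendsto (fun x => x⁻¹ ^ n * expInvSq x ^ k * exp (-expInvSq x)) (𝓝[>] 0) (𝓝 0) := by
  refine squeeze_zero' ?_ ?_
    ((tendsto_pow_mul_exp_neg_atTop_nhds_zero (n + k)).comp tendsto_expInvSq)
  · filter_upwards [self_mem_nhdsWithin] with x hx
    have := expInvSq_pos x
    have : 0 < x := hx
    positivity
  · filter_upwards [self_mem_nhdsWithin] with x hx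
    have : 0 < x := hx
    have := expInvSq_pos x
    rw [Function.comp_apply, pow_add]
    gcongr
    exact inv_le_expInvSq x

lemma tendsto_h19Deriv : Tendsto h19Deriv (𝓝[>] 0) (𝓝 0) := by
  have h := (tendsto_inv_pow_mul_exp_neg_expInvSq 3 1).const_mul 2
  rw [mul_zero] at h
  refine h.congr fun x => ?_
  rw [h19Deriv]
  ring

lemma tendsto_h19Deriv2 : Tendsto h19Deriv2 (𝓝[>] 0) (𝓝 0) := by
  have h := (((tendsto_inv_pow_mul_exp_neg_expInvSq 6 2).const_mul 4).sub
    ((tendsto_inv_pow_mul_exp_neg_expInvSq 6 1).const_mul 4)).sub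
    ((tendsto_inv_pow_mul_exp_neg_expInvSq 4 1).const_mul 6)
  simp only [mul_zero, sub_zero] at h
  refine h.congr' ?_
  filter_upwards [self_mem_nhdsWithin] with x (hx : 0 < x)
  rw [h19Deriv2, h19Deriv, h19Deriv2Factor]
  field_simp
  ring

lemma h19Deriv2_le {x : ℝ} (hx : 0 < x) :
    h19Deriv2 x ≤ 4 * expInvSq x ^ 2 * exp (-expInvSq x) / x ^ 6 := by
  have hB : h19Deriv2Factor x ≤ 2 * expInvSq x := by
    unfold h19Deriv2Factor
    nlinarith [sq_nonneg x]
  calc h19Deriv2 x ≤ h19Deriv x * (2 * expInvSq x) / x ^ 3 := by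
        have := h19Deriv_pos hx
        unfold h19Deriv2
        gcongr
    _ = _ := by
      rw [h19Deriv]
      field_simp
      ring

lemma le_h19Deriv2 {x : ℝ} (hx : 0 < x) (hx2 : x ≤ 1 / 2) :
    2 * exp (-expInvSq x) / x ^ 6 ≤ h19Deriv2 x := by
  have hE : 1 ≤ expInvSq x := one_le_exp (by positivity)
  have hEB : 1 ≤ expInvSq x * h19Deriv2Factor x :=
    one_le_mul_of_one_le_of_one_le hE (one_le_h19Deriv2Factor hx hx2)
  calc 2 * exp (-expInvSq x) / x ^ 6
      ≤ 2 * exp (-expInvSq x) * (expInvSq x * h19Deriv2Factor x) / x ^ 6 :=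
        div_le_div_of_nonneg_right (le_mul_of_one_le_right (by positivity) hEB) (by positivity)
    _ = h19Deriv2 x := by
      rw [h19Deriv2, h19Deriv]
      field_simp

lemma tendsto_const_mul_nhdsGT_zero {c : ℝ} (hc : 0 < c) :
    Tendsto (c * ·) (𝓝[>] 0) (𝓝[>] 0) :=
  tendsto_iff_comap.2 (comap_mulLeft_nhdsGT_zero hc).ge

lemma eventually_two_mul_expInvSq_le {c : ℝ} (hc : 0 < c) (hc1 : c < 1) :
    ∀ᶠ u in 𝓝[>] 0, 2 * expInvSq u ≤ expInvSq (c * u) := by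
  have hk : 0 < 1 / c ^ 2 - 1 := by
    rw [sub_pos, lt_one_div one_pos (by positivity), div_one]
    nlinarith
  filter_upwards [(tendsto_one_div_sq.const_mul_atTop hk).eventually_ge_atTop (log 2),
    self_mem_nhdsWithin] with u hu (hu0 : 0 < u)
  have hsplit : 1 / (c * u) ^ 2 = (1 / c ^ 2 - 1) * (1 / u ^ 2) + 1 / u ^ 2 := by
    field_simp
    ring
  rw [expInvSq, expInvSq, hsplit, exp_add]
  gcongr
  exact (log_le_iff_le_exp two_pos).1 hu

lemma h19Deriv2_mul_div_le {c u : ℝ} (hc : 0 < c) (hu : 0 < u) (hu2 : u ≤ 1 / 2)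
    (hE : 2 * expInvSq u ≤ expInvSq (c * u)) :
    h19Deriv2 (c * u) / h19Deriv2 u
      ≤ 8 / c ^ 6 * ((expInvSq (c * u) / 2) ^ 2 * exp (-(expInvSq (c * u) / 2))) := by
  set E := expInvSq u
  set E' := expInvSq (c * u)
  calc h19Deriv2 (c * u) / h19Deriv2 u
      ≤ (4 * E' ^ 2 * exp (-E') / (c * u) ^ 6) / (2 * exp (-E) / u ^ 6) :=
        div_le_div₀ (by positivity) (h19Deriv2_le (by positivity)) (by positivity)
          (le_h19Deriv2 hu hu2)
    _ = 2 / c ^ 6 * (E' ^ 2 * exp (E - E')) := by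
      rw [exp_sub, exp_neg, exp_neg]
      field_simp
      ring
    _ ≤ 2 / c ^ 6 * (E' ^ 2 * exp (-(E' / 2))) := by
      gcongr
      linarith
    _ = _ := by ring

lemma tendsto_h19Deriv2_mul_div {c : ℝ} (hc : 0 < c) (hc1 : c < 1) :
    Tendsto (fun u => h19Deriv2 (c * u) / h19Deriv2 u) (𝓝[>] 0) (𝓝 0) := by
  have hbound := ((tendsto_pow_mul_exp_neg_atTop_nhds_zero 2).comp
    ((tendsto_expInvSq.comp (tendsto_const_mul_nhdsGT_zero hc)).atTop_div_const two_pos)).const_mul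
      (8 / c ^ 6)
  rw [mul_zero] at hbound
  refine squeeze_zero' ?_ ?_ hbound
  · filter_upwards [Ioo_mem_nhdsGT (by norm_num : (0 : ℝ) < 1 / 2)] with u ⟨hu, hu2⟩
    exact div_nonneg (h19Deriv2_pos (by positivity) (by nlinarith)).le
      (h19Deriv2_pos hu hu2.le).le
  · filter_upwards [Ioo_mem_nhdsGT (by norm_num : (0 : ℝ) < 1 / 2),
      eventually_two_mul_expInvSq_le hc hc1] with u ⟨hu, hu2⟩ hE
    exact h19Deriv2_mul_div_le hc hu hu2.le hE

noncomputable def numer19 (c d u : ℝ) : ℝ :=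
  c * h19Deriv2 (c * u + d) * (1 + h19Deriv u) - (1 + h19Deriv (c * u + d)) * h19Deriv2 u

lemma analyticOnNhd_numer19 {c d : ℝ} (hc : 0 < c) (hd : 0 ≤ d) :
    AnalyticOnNhd ℝ (numer19 c d) (Ioi 0) := by
  intro x (hx : 0 < x)
  unfold numer19
  have hcd : c * x + d ≠ 0 := by positivity
  have haff : AnalyticAt ℝ (fun u => c * u + d) x :=
    (analyticAt_const.mul analyticAt_id).add analyticAt_const
  have h1 : AnalyticAt ℝ (fun u => h19Deriv (c * u + d)) x :=
    (analyticAt_h19Deriv hcd).comp (f := fun u => c * u + d) haff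
  have h2 : AnalyticAt ℝ (fun u => h19Deriv2 (c * u + d)) x :=
    (analyticAt_h19Deriv2 hcd).comp (f := fun u => c * u + d) haff
  exact ((analyticAt_const.mul h2).mul (analyticAt_const.add (analyticAt_h19Deriv hx.ne'))).sub
    ((analyticAt_const.add h1).mul (analyticAt_h19Deriv2 hx.ne'))

lemma eventually_numer19_ne_zero_of_h19Deriv2_ne_zero {c d : ℝ} (hc : c ≠ 0) (hd : d ≠ 0)
    (h : h19Deriv2 d ≠ 0) : ∀ᶠ u in 𝓝[>] 0, numer19 c d u ≠ 0 := by
  have haff : Tendsto (fun u => c * u + d) (𝓝[>] 0) (𝓝 d) := by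
    have : Continuous (fun u : ℝ => c * u + d) := by fun_prop
    simpa using (this.tendsto 0).mono_left nhdsWithin_le_nhds
  have hlim : Tendsto (numer19 c d) (𝓝[>] 0)
      (𝓝 (c * h19Deriv2 d * (1 + 0) - (1 + h19Deriv d) * 0)) :=
    ((tendsto_const_nhds.mul
        ((analyticAt_h19Deriv2 hd).continuousAt.tendsto.comp haff)).mul
        (tendsto_const_nhds.add tendsto_h19Deriv)).sub
      ((tendsto_const_nhds.add ((analyticAt_h19Deriv hd).continuousAt.tendsto.comp haff)).mul
        tendsto_h19Deriv2)
  rw [add_zero, mul_one, mul_zero, sub_zero] at hlim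
  exact hlim.eventually_ne (mul_ne_zero hc h)

lemma eventually_numer19_neg_of_h19Deriv2Factor_nonpos {c d : ℝ} (hc : 0 < c) (hd : 0 < d)
    (h : h19Deriv2Factor d ≤ 0) : ∀ᶠ u in 𝓝[>] 0, numer19 c d u < 0 := by
  filter_upwards [Ioo_mem_nhdsGT (by norm_num : (0 : ℝ) < 1 / 2)] with u ⟨hu, hu2⟩
  have hdu : d < c * u + d := lt_add_of_pos_left d (mul_pos hc hu)
  have hfac : h19Deriv2Factor (c * u + d) < 0 :=
    (strictAntiOn_h19Deriv2Factor hd (hd.trans hdu) hdu).trans_le h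
  have hneg : h19Deriv2 (c * u + d) < 0 :=
    div_neg_of_neg_of_pos (mul_neg_of_pos_of_neg (h19Deriv_pos (hd.trans hdu)) hfac)
      (by positivity)
  have hterm1 : c * h19Deriv2 (c * u + d) * (1 + h19Deriv u) < 0 :=
    mul_neg_of_neg_of_pos (mul_neg_of_pos_of_neg hc hneg) (by linarith [h19Deriv_pos hu])
  have hterm2 : 0 < (1 + h19Deriv (c * u + d)) * h19Deriv2 u :=
    mul_pos (by linarith [h19Deriv_pos (hd.trans hdu)]) (h19Deriv2_pos hu hu2.le)
  rw [numer19]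
  linarith

lemma eventually_numer19_zero_neg {c : ℝ} (hc : 0 < c) (hc1 : c < 1) :
    ∀ᶠ u in 𝓝[>] 0, numer19 c 0 u < 0 := by
  have hlim : Tendsto (fun u => c * (h19Deriv2 (c * u) / h19Deriv2 u) * (1 + h19Deriv u)
      - (1 + h19Deriv (c * u))) (𝓝[>] 0) (𝓝 (-1)) := by
    simpa using ((tendsto_const_nhds.mul (tendsto_h19Deriv2_mul_div hc hc1)).mul
      (tendsto_const_nhds.add tendsto_h19Deriv)).sub
      (tendsto_const_nhds.add (tendsto_h19Deriv.comp (tendsto_const_mul_nhdsGT_zero hc)))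
  filter_upwards [hlim.eventually_lt_const neg_one_lt_zero,
    Ioo_mem_nhdsGT (by norm_num : (0 : ℝ) < 1 / 2)] with u hneg ⟨hu, hu2⟩
  have hpos := h19Deriv2_pos hu hu2.le
  have hfactor : numer19 c 0 u = h19Deriv2 u * (c * (h19Deriv2 (c * u) / h19Deriv2 u)
      * (1 + h19Deriv u) - (1 + h19Deriv (c * u))) := by
    rw [numer19, add_zero]
    field_simp
  rw [hfactor]
  exact mul_neg_of_pos_of_neg hpos hneg

lemma eventually_numer19_ne_zero {c d : ℝ} (hc : 0 < c) (hc1 : c < 1) (hd : 0 ≤ d) :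
    ∀ᶠ u in 𝓝[>] 0, numer19 c d u ≠ 0 := by
  rcases hd.eq_or_lt with rfl | hd
  · exact (eventually_numer19_zero_neg hc hc1).mono fun _ hu => hu.ne
  by_cases hfac : h19Deriv2Factor d ≤ 0
  · exact (eventually_numer19_neg_of_h19Deriv2Factor_nonpos hc hd hfac).mono fun _ hu => hu.ne
  · have h2 : 0 < h19Deriv2 d :=
      div_pos (mul_pos (h19Deriv_pos hd) (not_le.1 hfac)) (by positivity)
    exact eventually_numer19_ne_zero_of_h19Deriv2_ne_zero hc.ne' hd.ne' h2.ne'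

lemma finite_setOf_Ioo_zero_of_analyticOnNhd {N : ℝ → ℝ} {a b : ℝ}
    (hN : AnalyticOnNhd ℝ N (Ioi a)) (ha : ∀ᶠ u in 𝓝[>] a, N u ≠ 0) :
    {u ∈ Ioo a b | N u = 0}.Finite := by
  by_contra hinf
  obtain ⟨x, hx, hacc⟩ := Set.Infinite.exists_accPt_of_subset_isCompact hinf isCompact_Icc
    fun u hu => Ioo_subset_Icc_self hu.1
  rw [accPt_iff_frequently_nhdsNE] at hacc
  rcases hx.1.eq_or_lt with rfl | hax
  · have hfreq : ∃ᶠ u in 𝓝[>] a, N u = 0 := by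
      rw [frequently_nhdsWithin_iff] at hacc ⊢
      exact hacc.mono fun u hu => ⟨hu.1.2, hu.1.1.1⟩
    exact hfreq ha
  · have hzero : EqOn N 0 (Ioi a) :=
      hN.eqOn_zero_of_preconnected_of_frequently_eq_zero isPreconnected_Ioi hax
        (hacc.mono fun u hu => hu.2)
    obtain ⟨u, hu, hua⟩ := (ha.and self_mem_nhdsWithin).exists
    exact hu (hzero hua)

lemma iteratedDerivWithin_two_eq_of_hasDerivAt {𝕜 F : Type*} [NontriviallyNormedField 𝕜]
    [NormedAddCommGroup F] [NormedSpace 𝕜 F] {f f' : 𝕜 → F} {s : Set 𝕜} {x : 𝕜} {f'' : F}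
    (hs : s ∈ 𝓝 x) (hf : ∀ᶠ z in 𝓝 x, HasDerivAt f (f' z) z) (hf' : HasDerivAt f' f'' x) :
    iteratedDerivWithin 2 f s x = f'' := by
  have hev : derivWithin f s =ᶠ[𝓝 x] f' := by
    filter_upwards [eventually_mem_nhds_iff.2 hs, hf] with z hz hfz
    rw [derivWithin_of_mem_nhds hz, hfz.deriv]
  rw [iteratedDerivWithin_eq_iterate, Function.iterate_succ_apply', Function.iterate_one,
    derivWithin_of_mem_nhds hs, hev.deriv_eq, hf'.deriv]

namespace InverseF19

variable {g : ℝ → ℝ} (hg : ∀ y ∈ Icc (0 : ℝ) (f19 1), g y ∈ Icc (0 : ℝ) 1 ∧ f19 (g y) = y)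
include hg

lemma leftInvOn : LeftInvOn g f19 (Icc 0 1) :=
  (strictMonoOn_f19.mono Icc_subset_Ici_self).injOn.rightInvOn_of_leftInvOn
    (fun y hy => (hg y hy).2) (fun _ => f19_mem_Icc) (fun y hy => (hg y hy).1)

lemma mapsTo_Ioo : MapsTo g (Ioo 0 (f19 1)) (Ioo 0 1) := by
  intro y hy
  obtain ⟨⟨h0, h1⟩, hfg⟩ := hg y (Ioo_subset_Icc_self hy)
  refine ⟨h0.lt_of_ne ?_, h1.lt_of_ne ?_⟩
  · rintro h
    rw [← h, f19_zero] at hfg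
    exact hy.1.ne hfg
  · rintro h
    rw [h] at hfg
    exact hy.2.ne' hfg

lemma strictMonoOn : StrictMonoOn g (Icc 0 (f19 1)) := by
  intro a ha b hb hab
  rwa [← (strictMonoOn_f19.mono Icc_subset_Ici_self).lt_iff_lt (hg a ha).1 (hg b hb).1,
    (hg a ha).2, (hg b hb).2]

lemma hasDerivAt {y : ℝ} (hy : y ∈ Ioo 0 (f19 1)) : HasDerivAt g (1 + h19Deriv (g y))⁻¹ y := by
  have hgy := mapsTo_Ioo hg hy
  have hcont : ContinuousAt g y := by
    refine (strictMonoOn hg).continuousAt_of_image_mem_nhds (Icc_mem_nhds hy.1 hy.2) ?_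
    exact mem_of_superset (Icc_mem_nhds hgy.1 hgy.2)
      fun x hx => ⟨f19 x, f19_mem_Icc hx, leftInvOn hg hx⟩
  refine HasDerivAt.of_local_left_inverse hcont (hasDerivAt_f19 hgy.1.ne')
    (by linarith [h19Deriv_pos hgy.1]) ?_
  filter_upwards [Icc_mem_nhds hy.1 hy.2] with z hz using (hg z hz).2

lemma iteratedDerivWithin_two_f19_comp {c d : ℝ} (hc : 0 < c) (hd : 0 ≤ d) {y : ℝ}
    (hy : y ∈ Ioo 0 (f19 1)) :
    iteratedDerivWithin 2 (fun y => f19 (c * g y + d)) (Icc 0 (f19 1)) y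
      = c * numer19 c d (g y) / (1 + h19Deriv (g y)) ^ 3 := by
  have hgy := mapsTo_Ioo hg hy
  have hg' := hasDerivAt hg hy
  have hcd : c * g y + d ≠ 0 := by nlinarith [hgy.1]
  have hA := (hasDerivAt_h19Deriv hcd).comp y ((hg'.const_mul c).add_const d)
  have hB := (hasDerivAt_h19Deriv hgy.1.ne').comp y hg'
  have hpos : 1 + h19Deriv (g y) ≠ 0 := by linarith [h19Deriv_pos hgy.1]
  have hD := (hA.const_add 1).mul (((hB.const_add 1).inv hpos).const_mul c)
  rw [iteratedDerivWithin_two_eq_of_hasDerivAt (Icc_mem_nhds hy.1 hy.2) ?_ hD]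
  · simp only [numer19, Function.comp_apply, Pi.inv_apply]
    field_simp
    ring
  filter_upwards [isOpen_Ioo.mem_nhds hy] with z hz
  have hgz := mapsTo_Ioo hg hz
  exact (hasDerivAt_f19 (by nlinarith [hgz.1])).comp z
    (((hasDerivAt hg hz).const_mul c).add_const d)

end InverseF19

theorem stmt19_general (c d : ℝ) (hc : 0 < c) (hc1 : c < 1) (hd : 0 ≤ d)
    (g : ℝ → ℝ)
    (hg2 : ∀ y ∈ Set.Icc (0 : ℝ) (f19 1), g y ∈ Set.Icc (0 : ℝ) 1 ∧ f19 (g y) = y) :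
    {y ∈ Set.Icc (0 : ℝ) (f19 1) |
      iteratedDerivWithin 2 (fun y => f19 (c * g y + d))
        (Set.Icc (0 : ℝ) (f19 1)) y = 0}.Finite := by
  have hzeros := finite_setOf_Ioo_zero_of_analyticOnNhd (b := 1) (analyticOnNhd_numer19 hc hd)
    (eventually_numer19_ne_zero hc hc1 hd)
  refine (((hzeros.image f19).insert 0).insert (f19 1)).subset ?_
  rintro y ⟨hy, hy2⟩
  rcases hy.1.eq_or_lt with rfl | h0
  · exact mem_insert_of_mem _ (mem_insert 0 _)
  rcases hy.2.eq_or_lt with rfl | h1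
  · exact mem_insert _ _
  have hgy := InverseF19.mapsTo_Ioo hg2 ⟨h0, h1⟩
  rw [InverseF19.iteratedDerivWithin_two_f19_comp hg2 hc hd ⟨h0, h1⟩] at hy2
  have hnum : numer19 c d (g y) = 0 := by
    have := h19Deriv_pos hgy.1
    have : (1 + h19Deriv (g y)) ^ 3 ≠ 0 := by positivity
    simpa [hc.ne', this] using hy2
  exact mem_insert_of_mem _ (mem_insert_of_mem _ ⟨g y, ⟨hgy, hnum⟩, (hg2 y hy).2⟩)

/-- For `f(x) = x + exp(−exp(x^{−2}))`, `λ(x) = cx + d` with `0 < c < 1`, `d ≥ 0`, and `g`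
the inverse of `f` restricted to `[0,1]`, the set `{y ∈ [0, f(1)] : (f ∘ λ ∘ g)''(y) = 0}`
is finite. -/
theorem stmt19 (c d : ℝ) (hc : 0 < c) (hc1 : c < 1) (hd : 0 ≤ d)
    (g : ℝ → ℝ)
    (hg1 : ∀ x ∈ Set.Icc (0 : ℝ) 1, g (f19 x) = x)
    (hg2 : ∀ y ∈ Set.Icc (0 : ℝ) (f19 1), g y ∈ Set.Icc (0 : ℝ) 1 ∧ f19 (g y) = y) :
    {y ∈ Set.Icc (0 : ℝ) (f19 1) |
      iteratedDerivWithin 2 (fun y => f19 (c * g y + d))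
        (Set.Icc (0 : ℝ) (f19 1)) y = 0}.Finite :=
  stmt19_general c d hc hc1 hd g hg2
end
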